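/- arXiv:2408.09775 — 9 statements merged into one kernel-verified Lean document; each statement's English description precedes it below -/
import Mathlib

section
/- Let F : ℝ^d → ℝ be L-smooth with L > 0. Let W ∈ ℝ^{m×m} have all column sums equal to 1. Let ρ > 0, γ > 0, η > 0 with γ ≤ ρ/(4Lη). For i = 1,…,m let x^i, w^i ∈ ℝ^d, let A^i be a symmetric positive definite matrix with A^i ⪰ ρ I_d, set g^i = (A^i)^{-1} w^i, x̃^i = Σ_j W_{ij} x^j − γ g^i, and x^{i,+} = x^i + η(x̃^i − x^i). Write x̄ = (1/m)Σ_i x^i, x̄^+ = (1/m)Σ_i x^{i,+}, and w̄ = (1/m)Σ_i w^i. Then F(x̄^+) ≤ F(x̄) + (2γη/ρ)‖∇F(x̄) − w̄‖² + (γη/(2ρ))·(1/m)Σ_{i=1}^m ‖w^i − w̄‖² − (ργη/4)·(1/m)Σ_{i=1}^m ‖g^i‖². -/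
open Finset
open scoped RealInnerProductSpace

lemma descent_aux {E : Type*} [NormedAddCommGroup E] [InnerProductSpace ℝ E] [CompleteSpace E]
    (F : E → ℝ) (L : ℝ) (hL : 0 ≤ L) (hdiff : Differentiable ℝ F)
    (hsm : ∀ x y, ‖gradient F x - gradient F y‖ ≤ L * ‖x - y‖) (x v : E) :
    F (x + v) ≤ F x + ⟪gradient F x, v⟫ + L / 2 * ‖v‖ ^ 2 := by
  set f : ℝ → ℝ := fun t => F (x + t • v) - F x - t * ⟪gradient F x, v⟫ with hf
  have hf' : ∀ t : ℝ, HasDerivAt f (⟪gradient F (x + t • v) - gradient F x, v⟫) t := by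
    intro t
    have h1 : HasDerivAt (fun t : ℝ => x + t • v) v t := by
      simpa using ((hasDerivAt_id t).smul_const v).const_add x
    have h2 : HasFDerivAt F (InnerProductSpace.toDual ℝ E (gradient F (x + t • v)) :
        E →L[ℝ] ℝ) (x + t • v) :=
      hasGradientAt_iff_hasFDerivAt.mp (hdiff (x + t • v)).hasGradientAt
    have h3 : HasDerivAt (fun t : ℝ => F (x + t • v))
        ((InnerProductSpace.toDual ℝ E (gradient F (x + t • v))) v) t :=
      h2.comp_hasDerivAt t h1
    have h4 : HasDerivAt (fun t : ℝ => t * ⟪gradient F x, v⟫) (⟪gradient F x, v⟫) t := by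
      simpa using (hasDerivAt_id t).mul_const (⟪gradient F x, v⟫)
    have := (h3.sub_const (F x)).sub h4
    rw [hf]
    simp only [inner_sub_left, InnerProductSpace.toDual_apply_apply] at this ⊢
    exact this
  have hB : ∀ t : ℝ, HasDerivAt (fun t : ℝ => L / 2 * ‖v‖ ^ 2 * t ^ 2) (L * ‖v‖ ^ 2 * t) t := by
    intro t
    have := (hasDerivAt_pow 2 t).const_mul (L / 2 * ‖v‖ ^ 2)
    exact this.congr_deriv (by push_cast; ring)
  have bound : ∀ t ∈ Set.Ico (0 : ℝ) 1,
      ‖⟪gradient F (x + t • v) - gradient F x, v⟫‖ ≤ L * ‖v‖ ^ 2 * t := by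
    intro t ht
    have h1 : ‖⟪gradient F (x + t • v) - gradient F x, v⟫‖ ≤
        ‖gradient F (x + t • v) - gradient F x‖ * ‖v‖ := by
      rw [Real.norm_eq_abs]
      exact abs_real_inner_le_norm _ _
    have h2 : ‖gradient F (x + t • v) - gradient F x‖ ≤ L * (t * ‖v‖) := by
      have := hsm (x + t • v) x
      simpa [norm_smul, abs_of_nonneg ht.1] using this
    calc ‖⟪gradient F (x + t • v) - gradient F x, v⟫‖
        ≤ ‖gradient F (x + t • v) - gradient F x‖ * ‖v‖ := h1
      _ ≤ L * (t * ‖v‖) * ‖v‖ := by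
          apply mul_le_mul_of_nonneg_right h2 (norm_nonneg v)
      _ = L * ‖v‖ ^ 2 * t := by ring
  have key := image_norm_le_of_norm_deriv_right_le_deriv_boundary
    (f := f) (a := 0) (b := 1)
    (fun t _ => (hf' t).continuousAt.continuousWithinAt)
    (fun t ht => (hf' t).hasDerivWithinAt)
    (by simp [hf]) hB bound (Set.right_mem_Icc.mpr zero_le_one)
  have : f 1 ≤ L / 2 * ‖v‖ ^ 2 * 1 ^ 2 := (le_abs_self _).trans key
  simp only [hf, one_smul, one_mul, one_pow, mul_one] at this
  linarith
open scoped RealInnerProductSpace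

lemma quad_lb {d : ℕ} (ρ : ℝ) (A : Matrix (Fin d) (Fin d) ℝ)
    (hAρ : (A - ρ • (1 : Matrix (Fin d) (Fin d) ℝ)).PosSemidef)
    (g : EuclideanSpace ℝ (Fin d)) :
    ρ * ‖g‖ ^ 2 ≤ ⟪Matrix.toEuclideanLin A g, g⟫ := by
  have h := hAρ.re_dotProduct_nonneg ((WithLp.equiv 2 (Fin d → ℝ)) g)
  have hg2 : ⟪g, g⟫ = ‖g‖ ^ 2 := real_inner_self_eq_norm_sq g
  simp only [star_trivial, RCLike.re_to_real, Matrix.sub_mulVec, Matrix.smul_mulVec,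
    Matrix.one_mulVec, dotProduct_sub, dotProduct_smul, smul_eq_mul] at h
  rw [Matrix.toEuclideanLin_apply]
  simp only [PiLp.inner_apply, RCLike.inner_apply, conj_trivial] at hg2 ⊢
  simp only [dotProduct] at h
  have e1 : ∑ i, ((WithLp.equiv 2 (Fin d → ℝ)).symm
        (A.mulVec ((WithLp.equiv 2 (Fin d → ℝ)) g))) i * g i
      = ∑ i, ((WithLp.equiv 2 (Fin d → ℝ)) g) i * A.mulVec ((WithLp.equiv 2 (Fin d → ℝ)) g) i :=
    Finset.sum_congr rfl fun i _ => mul_comm _ _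
  have e2 : ∑ i, ((WithLp.equiv 2 (Fin d → ℝ)) g) i * ((WithLp.equiv 2 (Fin d → ℝ)) g) i
      = ‖g‖ ^ 2 := hg2
  rw [← hg2]
  simp only [WithLp.equiv_apply] at h
  linarith [h]
open scoped RealInnerProductSpace

lemma wAg_aux {d : ℕ} (A : Matrix (Fin d) (Fin d) ℝ) (hA : A.PosDef)
    (w g : EuclideanSpace ℝ (Fin d))
    (hg : g = Matrix.toEuclideanLin A⁻¹ w) : Matrix.toEuclideanLin A g = w := by
  have hdet : IsUnit A.det := isUnit_iff_ne_zero.mpr hA.det_pos.ne'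
  rw [hg, Matrix.toEuclideanLin_apply, Matrix.toEuclideanLin_apply]
  simp [Matrix.mulVec_mulVec, Matrix.mul_nonsing_inv A hdet]

lemma young1_aux (ρ a b : ℝ) (hρ : 0 < ρ) : a * b ≤ 2 / ρ * a ^ 2 + ρ / 8 * b ^ 2 := by
  have h : 2 / ρ * a ^ 2 + ρ / 8 * b ^ 2 = (16 * a ^ 2 + ρ ^ 2 * b ^ 2) / (8 * ρ) := by
    field_simp; ring
  rw [h, le_div_iff₀ (by positivity)]
  nlinarith [sq_nonneg (4 * a - ρ * b)]

lemma young2_aux (ρ a b : ℝ) (hρ : 0 < ρ) : a * b ≤ 1 / (2 * ρ) * a ^ 2 + ρ / 2 * b ^ 2 := by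
  have h : 1 / (2 * ρ) * a ^ 2 + ρ / 2 * b ^ 2 = (a ^ 2 + ρ ^ 2 * b ^ 2) / (2 * ρ) := by
    field_simp
  rw [h, le_div_iff₀ (by positivity)]
  nlinarith [sq_nonneg (a - ρ * b)]

lemma avg_norm_sq_le_aux {d m : ℕ} (hm : 0 < m) (g : Fin m → EuclideanSpace ℝ (Fin d)) :
    ‖(m : ℝ)⁻¹ • ∑ i, g i‖ ^ 2 ≤ (m : ℝ)⁻¹ * ∑ i, ‖g i‖ ^ 2 := by
  have hm' : (0 : ℝ) < m := Nat.cast_pos.mpr hm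
  have h1 : ‖∑ i, g i‖ ≤ ∑ i, ‖g i‖ := norm_sum_le _ _
  have h2 : (∑ i : Fin m, ‖g i‖) ^ 2 ≤ (m : ℝ) * ∑ i, ‖g i‖ ^ 2 := by
    have := sq_sum_le_card_mul_sum_sq (s := (Finset.univ : Finset (Fin m)))
      (f := fun i => ‖g i‖)
    simpa using this
  have h3 : ‖∑ i, g i‖ ^ 2 ≤ (m : ℝ) * ∑ i, ‖g i‖ ^ 2 :=
    le_trans (pow_le_pow_left₀ (norm_nonneg _) h1 2) h2
  calc ‖(m : ℝ)⁻¹ • ∑ i, g i‖ ^ 2 = (m : ℝ)⁻¹ ^ 2 * ‖∑ i, g i‖ ^ 2 := by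
        rw [norm_smul, Real.norm_eq_abs, abs_of_pos (by positivity)]; ring
    _ ≤ (m : ℝ)⁻¹ ^ 2 * ((m : ℝ) * ∑ i, ‖g i‖ ^ 2) :=
        mul_le_mul_of_nonneg_left h3 (by positivity)
    _ = (m : ℝ)⁻¹ * ∑ i, ‖g i‖ ^ 2 := by field_simp

lemma master_aux (ρ γ η L P Q S I n2 Fb Fp : ℝ) (hρ : 0 < ρ) (hγ : 0 < γ) (hη : 0 < η)
    (hL : 0 < L) (hLγη : L * (γ * η) ≤ ρ / 4)
    (hdesc : Fp ≤ Fb - γ * η * I + L / 2 * (γ * η) ^ 2 * n2)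
    (hI : 3 * ρ / 8 * S - 2 / ρ * P - 1 / (2 * ρ) * Q ≤ I)
    (hn2 : n2 ≤ S) (hn2' : 0 ≤ n2) :
    Fp ≤ Fb + 2 * γ * η / ρ * P + γ * η / (2 * ρ) * Q - ρ * γ * η / 4 * S := by
  have hc : 0 < γ * η := mul_pos hγ hη
  have h1 : L / 2 * (γ * η) ^ 2 * n2 ≤ ρ / 8 * (γ * η) * S := by
    nlinarith [mul_le_mul_of_nonneg_right hLγη hn2', mul_le_mul_of_nonneg_left hn2 hρ.le,
      mul_pos hc hc]
  have h2 : γ * η * (3 * ρ / 8 * S - 2 / ρ * P - 1 / (2 * ρ) * Q) ≤ γ * η * I :=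
    mul_le_mul_of_nonneg_left hI hc.le
  have heq : Fb - γ * η * (3 * ρ / 8 * S - 2 / ρ * P - 1 / (2 * ρ) * Q) + ρ / 8 * (γ * η) * S
      = Fb + 2 * γ * η / ρ * P + γ * η / (2 * ρ) * Q - ρ * γ * η / 4 * S := by
    ring
  linarith

/-- **Descent lemma for the adaptive decentralized step.**
For `L`-smooth `F`, column-stochastic `W`, `Aⁱ ⪰ ρ I` symmetric positive definite,
`gⁱ = (Aⁱ)⁻¹ wⁱ`, `x̃ⁱ = ∑ⱼ Wᵢⱼ xʲ − γ gⁱ`, `xⁱ⁺ = xⁱ + η(x̃ⁱ − xⁱ)` and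
`γ ≤ ρ/(4Lη)`:
`F(x̄⁺) ≤ F(x̄) + (2γη/ρ)‖∇F(x̄) − w̄‖² + (γη/(2ρ))(1/m)∑‖wⁱ − w̄‖²
         − (ργη/4)(1/m)∑‖gⁱ‖²`. -/
theorem adaptive_descent_lemma {d m : ℕ} (hm : 0 < m)
    (F : EuclideanSpace ℝ (Fin d) → ℝ) (L : ℝ) (hL : 0 < L)
    (hFdiff : Differentiable ℝ F)
    (hFsmooth : ∀ x y, ‖gradient F x - gradient F y‖ ≤ L * ‖x - y‖)
    (W : Matrix (Fin m) (Fin m) ℝ) (hWcol : ∀ j, ∑ i, W i j = 1)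
    (ρ γ η : ℝ) (hρ : 0 < ρ) (hγ : 0 < γ) (hη : 0 < η)
    (hγρ : γ ≤ ρ / (4 * L * η))
    (x w g xt xp : Fin m → EuclideanSpace ℝ (Fin d))
    (A : Fin m → Matrix (Fin d) (Fin d) ℝ)
    (hAsym : ∀ i, (A i).IsSymm) (hApd : ∀ i, (A i).PosDef)
    (hAρ : ∀ i, (A i - ρ • (1 : Matrix (Fin d) (Fin d) ℝ)).PosSemidef)
    (hg : ∀ i, g i = Matrix.toEuclideanLin ((A i)⁻¹) (w i))
    (hxt : ∀ i, xt i = (∑ j, W i j • x j) - γ • g i)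
    (hxp : ∀ i, xp i = x i + η • (xt i - x i)) :
    F ((m : ℝ)⁻¹ • ∑ i, xp i) ≤
      F ((m : ℝ)⁻¹ • ∑ i, x i) +
        2 * γ * η / ρ *
          ‖gradient F ((m : ℝ)⁻¹ • ∑ i, x i) - (m : ℝ)⁻¹ • ∑ i, w i‖ ^ 2 +
        γ * η / (2 * ρ) * ((m : ℝ)⁻¹ * ∑ i, ‖w i - (m : ℝ)⁻¹ • ∑ j, w j‖ ^ 2) -
        ρ * γ * η / 4 * ((m : ℝ)⁻¹ * ∑ i, ‖g i‖ ^ 2) := by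
  have hm' : (0 : ℝ) < m := Nat.cast_pos.mpr hm
  have hc : 0 < γ * η := mul_pos hγ hη
  set xbar : EuclideanSpace ℝ (Fin d) := (m : ℝ)⁻¹ • ∑ i, x i with hxbar
  set wbar : EuclideanSpace ℝ (Fin d) := (m : ℝ)⁻¹ • ∑ i, w i with hwbar
  set gbar : EuclideanSpace ℝ (Fin d) := (m : ℝ)⁻¹ • ∑ i, g i with hgbar
  set G : EuclideanSpace ℝ (Fin d) := gradient F xbar with hG
  -- averaged iterate
  have hsum_xt : ∑ i, xt i = (∑ j, x j) - γ • ∑ i, g i := by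
    simp only [hxt]
    rw [Finset.sum_sub_distrib]
    congr 1
    · rw [Finset.sum_comm]
      exact Finset.sum_congr rfl fun j _ => by rw [← Finset.sum_smul, hWcol j, one_smul]
    · exact (Finset.smul_sum).symm
  have hsum_xp : ∑ i, xp i = (∑ i, x i) + (-(γ * η)) • ∑ i, g i := by
    simp only [hxp]
    rw [Finset.sum_add_distrib]
    congr 1
    have : ∑ i, η • (xt i - x i) = η • ((∑ i, xt i) - ∑ i, x i) := by
      simp [Finset.smul_sum, smul_sub, Finset.sum_sub_distrib]
    rw [this, hsum_xt]
    module
  have hbar : (m : ℝ)⁻¹ • ∑ i, xp i = xbar + (-(γ * η)) • gbar := by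
    rw [hsum_xp, hxbar, hgbar]
    module
  -- descent step
  have hdesc : F ((m : ℝ)⁻¹ • ∑ i, xp i) ≤
      F xbar - γ * η * ⟪G, gbar⟫ + L / 2 * (γ * η) ^ 2 * ‖gbar‖ ^ 2 := by
    rw [hbar]
    have h := descent_aux F L hL.le hFdiff hFsmooth xbar ((-(γ * η)) • gbar)
    rw [real_inner_smul_right, norm_smul, Real.norm_eq_abs, abs_neg,
      abs_of_pos hc, mul_pow] at h
    linarith [h]
  -- per-agent inner product lower bound
  have hi : ∀ i, 3 * ρ / 8 * ‖g i‖ ^ 2 - 2 / ρ * ‖G - wbar‖ ^ 2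
      - 1 / (2 * ρ) * ‖w i - wbar‖ ^ 2 ≤ ⟪G, g i⟫ := by
    intro i
    have hw : ρ * ‖g i‖ ^ 2 ≤ ⟪w i, g i⟫ := by
      have h := quad_lb ρ (A i) (hAρ i) (g i)
      rwa [wAg_aux (A i) (hApd i) (w i) (g i) (hg i)] at h
    have hsplit : ⟪G, g i⟫ = ⟪G - wbar, g i⟫ + ⟪wbar - w i, g i⟫ + ⟪w i, g i⟫ := by
      rw [← inner_add_left, ← inner_add_left]
      congr 1
      abel
    have a1 := abs_real_inner_le_norm (G - wbar) (g i)
    have a2 := abs_real_inner_le_norm (wbar - w i) (g i)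
    have n1 := neg_abs_le ⟪G - wbar, g i⟫
    have n2 := neg_abs_le ⟪wbar - w i, g i⟫
    rw [norm_sub_rev wbar (w i)] at a2
    have hy1 := young1_aux ρ ‖G - wbar‖ ‖g i‖ hρ
    have hy2 := young2_aux ρ ‖w i - wbar‖ ‖g i‖ hρ
    rw [hsplit]
    linarith
  -- averaged inner product lower bound
  have hIlb : 3 * ρ / 8 * ((m : ℝ)⁻¹ * ∑ i, ‖g i‖ ^ 2) - 2 / ρ * ‖G - wbar‖ ^ 2
      - 1 / (2 * ρ) * ((m : ℝ)⁻¹ * ∑ i, ‖w i - wbar‖ ^ 2) ≤ ⟪G, gbar⟫ := by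
    have hinner : ⟪G, gbar⟫ = (m : ℝ)⁻¹ * ∑ i, ⟪G, g i⟫ := by
      rw [hgbar, real_inner_smul_right, inner_sum]
    have hsum := Finset.sum_le_sum (fun i (_ : i ∈ Finset.univ) => hi i)
    have hexp : ∑ i, (3 * ρ / 8 * ‖g i‖ ^ 2 - 2 / ρ * ‖G - wbar‖ ^ 2
        - 1 / (2 * ρ) * ‖w i - wbar‖ ^ 2)
        = 3 * ρ / 8 * (∑ i, ‖g i‖ ^ 2) - (m : ℝ) * (2 / ρ * ‖G - wbar‖ ^ 2)
          - 1 / (2 * ρ) * (∑ i, ‖w i - wbar‖ ^ 2) := by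
      simp only [Finset.sum_sub_distrib, Finset.sum_const, Finset.card_univ, Fintype.card_fin,
        nsmul_eq_mul, ← Finset.mul_sum]
    rw [hexp] at hsum
    have hmul := mul_le_mul_of_nonneg_left hsum (inv_nonneg.mpr hm'.le)
    rw [hinner]
    have heq : (m : ℝ)⁻¹ * (3 * ρ / 8 * (∑ i, ‖g i‖ ^ 2)
        - (m : ℝ) * (2 / ρ * ‖G - wbar‖ ^ 2) - 1 / (2 * ρ) * (∑ i, ‖w i - wbar‖ ^ 2))
        = 3 * ρ / 8 * ((m : ℝ)⁻¹ * ∑ i, ‖g i‖ ^ 2) - 2 / ρ * ‖G - wbar‖ ^ 2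
          - 1 / (2 * ρ) * ((m : ℝ)⁻¹ * ∑ i, ‖w i - wbar‖ ^ 2) := by
      field_simp
    rw [heq] at hmul
    exact hmul
  have hn2 : ‖gbar‖ ^ 2 ≤ (m : ℝ)⁻¹ * ∑ i, ‖g i‖ ^ 2 := avg_norm_sq_le_aux hm g
  have hLγη : L * (γ * η) ≤ ρ / 4 := by
    rw [le_div_iff₀ (by positivity)] at hγρ
    nlinarith
  exact master_aux ρ γ η L (‖G - wbar‖ ^ 2) ((m : ℝ)⁻¹ * ∑ i, ‖w i - wbar‖ ^ 2)
    ((m : ℝ)⁻¹ * ∑ i, ‖g i‖ ^ 2) (⟪G, gbar⟫) (‖gbar‖ ^ 2) (F xbar) _ hρ hγ hη hL hLγη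
    hdesc hIlb hn2 (sq_nonneg _)
end

section
/- Let ρ > 0 and for i = 1,…,m let A^i be a symmetric positive definite d×d real matrix with A^i ⪰ ρ I_d, let w^i ∈ ℝ^d, and set g^i = (A^i)^{-1} w^i. Write w̄ = (1/m)Σ_i w^i and ḡ = (1/m)Σ_i g^i. Then (ρ/2)·(1/m)Σ_{i=1}^m ‖g^i‖² ≤ (1/(2ρ))·(1/m)Σ_{i=1}^m ‖w^i − w̄‖² + ⟨w̄, ḡ⟩. -/
open Finset
open scoped RealInnerProductSpace

lemma key_coercive {d : ℕ} {M : Matrix (Fin d) (Fin d) ℝ} {ρ : ℝ}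
    (h : (M - ρ • (1 : Matrix (Fin d) (Fin d) ℝ)).PosSemidef)
    (x : EuclideanSpace ℝ (Fin d)) :
    ρ * ‖x‖ ^ 2 ≤ ⟪Matrix.toEuclideanLin M x, x⟫ := by
  have h2 := h.dotProduct_mulVec_nonneg (WithLp.equiv 2 (Fin d → ℝ) x)
  simp only [Matrix.sub_mulVec, Matrix.smul_mulVec, Matrix.one_mulVec,
    dotProduct_sub, dotProduct_smul, star_trivial, smul_eq_mul, sub_nonneg] at h2
  have hinner : ⟪Matrix.toEuclideanLin M x, x⟫ =
      dotProduct ((WithLp.equiv 2 (Fin d → ℝ)) x)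
        (M.mulVec ((WithLp.equiv 2 (Fin d → ℝ)) x)) := by
    simp [Matrix.toEuclideanLin_apply, PiLp.inner_apply, dotProduct, mul_comm]
  have hnorm : ‖x‖ ^ 2 = dotProduct ((WithLp.equiv 2 (Fin d → ℝ)) x)
      ((WithLp.equiv 2 (Fin d → ℝ)) x) := by
    rw [← real_inner_self_eq_norm_sq]
    simp [PiLp.inner_apply, dotProduct]
    rw [EuclideanSpace.norm_sq_eq]; simp [sq]
  rw [hinner, hnorm]
  exact h2

lemma key_inv_apply {d : ℕ} {M : Matrix (Fin d) (Fin d) ℝ} (h : M.PosDef)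
    (x : EuclideanSpace ℝ (Fin d)) :
    Matrix.toEuclideanLin M (Matrix.toEuclideanLin M⁻¹ x) = x := by
  have hdet : IsUnit M.det := isUnit_iff_ne_zero.mpr h.det_pos.ne'
  rw [Matrix.toEuclideanLin_apply, Matrix.toEuclideanLin_apply]
  simp [Matrix.mulVec_mulVec, Matrix.mul_nonsing_inv M hdet]

/-- **Key preconditioned inequality.**
For symmetric positive definite matrices `Aⁱ ⪰ ρ I` and `gⁱ = (Aⁱ)⁻¹ wⁱ`,
`(ρ/2)·(1/m)∑‖gⁱ‖² ≤ (1/(2ρ))·(1/m)∑‖wⁱ − w̄‖² + ⟨w̄, ḡ⟩`. -/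
theorem preconditioned_inner_bound {d m : ℕ} (hm : 0 < m)
    (ρ : ℝ) (hρ : 0 < ρ)
    (A : Fin m → Matrix (Fin d) (Fin d) ℝ)
    (hAsym : ∀ i, (A i).IsSymm)
    (hApd : ∀ i, (A i).PosDef)
    (hAρ : ∀ i, (A i - ρ • (1 : Matrix (Fin d) (Fin d) ℝ)).PosSemidef)
    (w g : Fin m → EuclideanSpace ℝ (Fin d))
    (hg : ∀ i, g i = Matrix.toEuclideanLin ((A i)⁻¹) (w i)) :
    ρ / 2 * ((m : ℝ)⁻¹ * ∑ i, ‖g i‖ ^ 2) ≤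
      1 / (2 * ρ) * ((m : ℝ)⁻¹ * ∑ i, ‖w i - (m : ℝ)⁻¹ • ∑ j, w j‖ ^ 2) +
        ⟪((m : ℝ)⁻¹ • ∑ i, w i), ((m : ℝ)⁻¹ • ∑ i, g i)⟫ := by
  set wbar : EuclideanSpace ℝ (Fin d) := (m : ℝ)⁻¹ • ∑ j, w j with hwbar
  -- per-index inequality
  have hi : ∀ i, ρ / 2 * ‖g i‖ ^ 2 ≤ 1 / (2 * ρ) * ‖w i - wbar‖ ^ 2 + ⟪wbar, g i⟫ := by
    intro i
    have hw : w i = Matrix.toEuclideanLin (A i) (g i) := by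
      rw [hg i, key_inv_apply (hApd i)]
    have h1 : ρ * ‖g i‖ ^ 2 ≤ ⟪w i, g i⟫ := by
      rw [hw]; exact key_coercive (hAρ i) (g i)
    have h2 : ⟪w i, g i⟫ = ⟪w i - wbar, g i⟫ + ⟪wbar, g i⟫ := by
      rw [inner_sub_left]; ring
    have h3 : ⟪w i - wbar, g i⟫ ≤ ‖w i - wbar‖ * ‖g i‖ := real_inner_le_norm _ _
    have h4 : ‖w i - wbar‖ * ‖g i‖ ≤ 1 / (2 * ρ) * ‖w i - wbar‖ ^ 2 + ρ / 2 * ‖g i‖ ^ 2 := by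
      have hne : ρ ≠ 0 := hρ.ne'
      have heq : ‖w i - wbar‖ * ‖g i‖ - (1 / (2 * ρ) * ‖w i - wbar‖ ^ 2 + ρ / 2 * ‖g i‖ ^ 2)
          = -((‖w i - wbar‖ - ρ * ‖g i‖) ^ 2 / (2 * ρ)) := by
        field_simp
        ring
      have hnn : 0 ≤ (‖w i - wbar‖ - ρ * ‖g i‖) ^ 2 / (2 * ρ) :=
        div_nonneg (sq_nonneg _) (by positivity)
      linarith
    nlinarith [h1, h3, h4, h2]
  have hsum : ∑ i, (ρ / 2 * ‖g i‖ ^ 2) ≤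
      ∑ i, (1 / (2 * ρ) * ‖w i - wbar‖ ^ 2 + ⟪wbar, g i⟫) :=
    Finset.sum_le_sum fun i _ => hi i
  have hinner_sum : ∑ i, ⟪wbar, g i⟫ = ⟪wbar, ∑ i, g i⟫ := (inner_sum _ _ _).symm
  have hmpos : (0 : ℝ) < (m : ℝ)⁻¹ := by positivity
  have := mul_le_mul_of_nonneg_left hsum hmpos.le
  rw [Finset.sum_add_distrib, hinner_sum] at this
  have hfin : ⟪wbar, ((m : ℝ)⁻¹ • ∑ i, g i)⟫ = (m : ℝ)⁻¹ * ⟪wbar, ∑ i, g i⟫ :=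
    real_inner_smul_right _ _ _
  rw [← Finset.mul_sum, ← Finset.mul_sum] at this
  calc ρ / 2 * ((m : ℝ)⁻¹ * ∑ i, ‖g i‖ ^ 2)
      = (m : ℝ)⁻¹ * (ρ / 2 * ∑ i, ‖g i‖ ^ 2) := by ring
    _ ≤ (m : ℝ)⁻¹ * (1 / (2 * ρ) * ∑ i, ‖w i - wbar‖ ^ 2 + ⟪wbar, ∑ i, g i⟫) := this
    _ = 1 / (2 * ρ) * ((m : ℝ)⁻¹ * ∑ i, ‖w i - wbar‖ ^ 2) + ⟪wbar, ((m : ℝ)⁻¹ • ∑ i, g i)⟫ := by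
        rw [hfin]; ring
end

section
/- Let W ∈ ℝ^{m×m} be symmetric with W𝟙 = 𝟙 and all column sums equal to 1, and suppose 0 ≤ ν < 1 satisfies ‖Wv‖ ≤ ν‖v‖ for every v ∈ ℝ^m with Σ_i v_i = 0. Let γ > 0 and η ∈ (0,1). For i = 1,…,m let x^i, g^i ∈ ℝ^d, and set x̃^i = Σ_j W_{ij} x^j − γ g^i and x^{i,+} = x^i + η(x̃^i − x^i). Write x̄ = (1/m)Σ_i x^i, x̄^+ = (1/m)Σ_i x^{i,+}, ḡ = (1/m)Σ_i g^i. Then Σ_{i=1}^m ‖x^{i,+} − x̄^+‖² ≤ (1 − (1−ν²)η/2) Σ_{i=1}^m ‖x^i − x̄‖² + (2ηγ²/(1−ν²)) Σ_{i=1}^m ‖g^i − ḡ‖². -/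
open Finset

private lemma euc_norm_sq {n : ℕ} (y : EuclideanSpace ℝ (Fin n)) : ‖y‖^2 = ∑ k, (y k)^2 := by
  rw [EuclideanSpace.norm_eq, Real.sq_sqrt (by positivity)]
  simp [sq_abs]

private lemma split_sq {E : Type*} [NormedAddCommGroup E] (a b : E) {s : ℝ}
    (hs0 : 0 < s) (hs1 : s < 1) :
    ‖a - b‖^2 ≤ (1-s)⁻¹ * ‖a‖^2 + s⁻¹ * ‖b‖^2 := by
  have h1 : 0 < 1 - s := by linarith
  have hab : ‖a - b‖^2 ≤ (‖a‖ + ‖b‖)^2 := by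
    have := norm_sub_le a b
    nlinarith [norm_nonneg (a-b), norm_nonneg a, norm_nonneg b]
  refine hab.trans ?_
  rw [inv_mul_eq_div, inv_mul_eq_div, div_add_div _ _ h1.ne' hs0.ne',
    le_div_iff₀ (by positivity)]
  nlinarith [sq_nonneg (s*‖a‖ - (1-s)*‖b‖)]

private lemma convex_sq {E : Type*} [NormedAddCommGroup E] [NormedSpace ℝ E] (a b : E) {t : ℝ}
    (ht0 : 0 < t) (ht1 : t < 1) :
    ‖(1-t) • a + t • b‖^2 ≤ (1-t) * ‖a‖^2 + t * ‖b‖^2 := by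
  have h1 : (0:ℝ) < 1 - t := by linarith
  have h : ‖(1-t) • a + t • b‖ ≤ (1-t) * ‖a‖ + t * ‖b‖ := by
    refine (norm_add_le _ _).trans ?_
    rw [norm_smul, norm_smul, Real.norm_eq_abs, Real.norm_eq_abs,
      abs_of_pos h1, abs_of_pos ht0]
  have hL : (0:ℝ) ≤ (1-t) * ‖a‖ + t * ‖b‖ := by positivity
  have h2 : ‖(1-t) • a + t • b‖^2 ≤ ((1-t) * ‖a‖ + t * ‖b‖)^2 := by
    nlinarith [norm_nonneg ((1-t) • a + t • b)]
  nlinarith [h2, sq_nonneg (‖a‖ - ‖b‖),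
    mul_nonneg (mul_nonneg ht0.le h1.le) (sq_nonneg (‖a‖ - ‖b‖))]

/-- **Consensus-error recursion for the momentum update.**
With `x̃ⁱ = ∑ⱼ Wᵢⱼ xʲ − γ gⁱ` and `xⁱ⁺ = xⁱ + η (x̃ⁱ − xⁱ)`,
`∑ᵢ ‖xⁱ⁺ − x̄⁺‖² ≤ (1 − (1−ν²)η/2) ∑ᵢ ‖xⁱ − x̄‖² + (2ηγ²/(1−ν²)) ∑ᵢ ‖gⁱ − ḡ‖²`. -/
theorem consensus_recursion {m d : ℕ}
    (W : Matrix (Fin m) (Fin m) ℝ) (hWsym : W.IsSymm)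
    (hWrow : ∀ i, ∑ j, W i j = 1) (hWcol : ∀ j, ∑ i, W i j = 1)
    (ν : ℝ) (hν0 : 0 ≤ ν) (hν1 : ν < 1)
    (hWspec : ∀ v : EuclideanSpace ℝ (Fin m), (∑ i, v i) = 0 →
      ‖Matrix.toEuclideanLin W v‖ ≤ ν * ‖v‖)
    (γ η : ℝ) (hγ : 0 < γ) (hη0 : 0 < η) (hη1 : η < 1)
    (x g xt xp : Fin m → EuclideanSpace ℝ (Fin d))
    (hxt : ∀ i, xt i = (∑ j, W i j • x j) - γ • g i)
    (hxp : ∀ i, xp i = x i + η • (xt i - x i)) :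
    ∑ i, ‖xp i - (m : ℝ)⁻¹ • ∑ j, xp j‖ ^ 2 ≤
      (1 - (1 - ν ^ 2) * η / 2) * ∑ i, ‖x i - (m : ℝ)⁻¹ • ∑ j, x j‖ ^ 2 +
        2 * η * γ ^ 2 / (1 - ν ^ 2) * ∑ i, ‖g i - (m : ℝ)⁻¹ • ∑ j, g j‖ ^ 2 := by
  rcases Nat.eq_zero_or_pos m with hm | hm
  · subst hm; simp
  have hmR : (m : ℝ) ≠ 0 := Nat.cast_ne_zero.mpr hm.ne'
  have hν2 : (0:ℝ) < 1 - ν^2 := by nlinarith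
  set s : ℝ := η * (1 - ν^2) / 2 with hs_def
  have hs0 : 0 < s := by positivity
  have hs1 : s < 1 := by nlinarith
  have h1s : (0:ℝ) < 1 - s := by linarith
  set xb : EuclideanSpace ℝ (Fin d) := (m : ℝ)⁻¹ • ∑ j, x j with hxb
  set gb : EuclideanSpace ℝ (Fin d) := (m : ℝ)⁻¹ • ∑ j, g j with hgb
  set u : Fin m → EuclideanSpace ℝ (Fin d) := fun i => x i - xb with hu
  set h : Fin m → EuclideanSpace ℝ (Fin d) := fun i => g i - gb with hh
  set w : Fin m → EuclideanSpace ℝ (Fin d) := fun i => ∑ j, W i j • u j with hw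
  show ∑ i, ‖xp i - (m : ℝ)⁻¹ • ∑ j, xp j‖ ^ 2 ≤
      (1 - (1 - ν ^ 2) * η / 2) * ∑ i, ‖u i‖ ^ 2 +
        2 * η * γ ^ 2 / (1 - ν ^ 2) * ∑ i, ‖h i‖ ^ 2
  -- sum of u is zero
  have husum : ∑ i, u i = 0 := by
    have hc : ∑ _i : Fin m, xb = (m:ℝ) • xb := by
      rw [Finset.sum_const, Finset.card_univ, Fintype.card_fin, ← Nat.cast_smul_eq_nsmul ℝ]
    simp only [hu, Finset.sum_sub_distrib]
    rw [hc, hxb, smul_smul, mul_inv_cancel₀ hmR, one_smul, sub_self]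
  -- sum of xp
  have hsum_xp : ∑ j, xp j = (∑ j, x j) - (η*γ) • ∑ j, g j := by
    have step : ∀ j, xp j = ((1-η) • x j + η • (∑ k, W j k • x k)) - (η*γ) • g j := by
      intro j; rw [hxp, hxt]; module
    have hdbl : ∑ j, ∑ k, W j k • x k = ∑ k, x k := by
      rw [Finset.sum_comm]
      refine Finset.sum_congr rfl fun k _ => ?_
      rw [← Finset.sum_smul, hWcol, one_smul]
    calc ∑ j, xp j = ∑ j, (((1-η) • x j + η • (∑ k, W j k • x k)) - (η*γ) • g j) :=
          Finset.sum_congr rfl fun j _ => step j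
      _ = (1-η) • (∑ j, x j) + η • (∑ j, ∑ k, W j k • x k) - (η*γ) • ∑ j, g j := by
          rw [Finset.sum_sub_distrib, Finset.sum_add_distrib, Finset.smul_sum, Finset.smul_sum,
            Finset.smul_sum]
      _ = (∑ j, x j) - (η*γ) • ∑ j, g j := by rw [hdbl]; module
  -- deviation formula
  have key_i : ∀ i, xp i - (m : ℝ)⁻¹ • ∑ j, xp j
      = ((1-η) • u i + η • w i) - (η*γ) • h i := by
    intro i
    have hwx : w i = (∑ j, W i j • x j) - xb := by
      simp only [hw, hu, smul_sub, Finset.sum_sub_distrib, ← Finset.sum_smul, hWrow, one_smul]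
    rw [hxp, hxt, hsum_xp, hwx]
    simp only [hu, hh, hxb, hgb, smul_sub, smul_add, smul_smul]
    module
  -- spectral estimate
  have hspec : ∑ i, ‖w i‖^2 ≤ ν^2 * ∑ i, ‖u i‖^2 := by
    have hwik : ∀ i k, w i k = ∑ j, W i j * u j k := by
      intro i k
      simp only [hw]
      simp [WithLp.ofLp_sum, Finset.sum_apply]
    calc ∑ i, ‖w i‖^2 = ∑ i, ∑ k, (w i k)^2 :=
          Finset.sum_congr rfl fun i _ => euc_norm_sq (w i)
      _ = ∑ k, ∑ i, (w i k)^2 := Finset.sum_comm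
      _ ≤ ∑ k, ν^2 * ∑ i, (u i k)^2 := by
          refine Finset.sum_le_sum fun k _ => ?_
          set v : EuclideanSpace ℝ (Fin m) := WithLp.toLp 2 (fun i => u i k) with hv
          have hv0 : ∑ i, v i = 0 := by
            show ∑ i, u i k = 0
            calc ∑ i, u i k = (∑ i, u i) k := by simp [WithLp.ofLp_sum, Finset.sum_apply]
              _ = 0 := by rw [husum]; rfl
          have hb := hWspec v hv0
          have hb2 : ‖Matrix.toEuclideanLin W v‖^2 ≤ ν^2 * ‖v‖^2 := by
            have hnn : 0 ≤ ν * ‖v‖ := by positivity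
            nlinarith [norm_nonneg (Matrix.toEuclideanLin W v)]
          have hWv : ∀ i, Matrix.toEuclideanLin W v i = ∑ j, W i j * v j := by
            intro i
            rw [Matrix.toEuclideanLin_apply]
            simp [Matrix.mulVec, dotProduct]
          rw [euc_norm_sq, euc_norm_sq] at hb2
          calc ∑ i, (w i k)^2 = ∑ i, (Matrix.toEuclideanLin W v i)^2 :=
                Finset.sum_congr rfl fun i _ => by rw [hwik, hWv]
            _ ≤ ν^2 * ∑ i, (v i)^2 := hb2
            _ = ν^2 * ∑ i, (u i k)^2 := rfl
      _ = ν^2 * ∑ i, ∑ k, (u i k)^2 := by rw [← Finset.mul_sum, Finset.sum_comm]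
      _ = ν^2 * ∑ i, ‖u i‖^2 := by
          rw [Finset.sum_congr rfl fun i _ => (euc_norm_sq (u i)).symm]
  have hSu : (0:ℝ) ≤ ∑ i, ‖u i‖^2 := by positivity
  have hSh : (0:ℝ) ≤ ∑ i, ‖h i‖^2 := by positivity
  have hinv : (0:ℝ) ≤ (1-s)⁻¹ := inv_nonneg.2 h1s.le
  clear_value xb gb u h w
  -- main chain
  calc ∑ i, ‖xp i - (m : ℝ)⁻¹ • ∑ j, xp j‖ ^ 2
      = ∑ i, ‖((1-η) • u i + η • w i) - (η*γ) • h i‖^2 :=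
        Finset.sum_congr rfl fun i _ => by rw [key_i]
    _ ≤ ∑ i, ((1-s)⁻¹ * ‖(1-η) • u i + η • w i‖^2 + (s⁻¹ * (η*γ)^2) * ‖h i‖^2) := by
        refine Finset.sum_le_sum fun i _ => ?_
        have hsp := split_sq ((1-η) • u i + η • w i) ((η*γ) • h i) hs0 hs1
        rw [norm_smul, Real.norm_eq_abs, abs_of_pos (by positivity : (0:ℝ) < η*γ),
          mul_pow] at hsp
        linarith [hsp]
    _ = (1-s)⁻¹ * (∑ i, ‖(1-η) • u i + η • w i‖^2)
          + (s⁻¹ * (η*γ)^2) * (∑ i, ‖h i‖^2) := by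
        rw [Finset.sum_add_distrib, ← Finset.mul_sum, ← Finset.mul_sum]
    _ ≤ (1-s)⁻¹ * ((1-η) * (∑ i, ‖u i‖^2) + η * (∑ i, ‖w i‖^2))
          + (s⁻¹ * (η*γ)^2) * (∑ i, ‖h i‖^2) := by
        refine add_le_add_left (mul_le_mul_of_nonneg_left ?_ hinv) _
        rw [Finset.mul_sum, Finset.mul_sum, ← Finset.sum_add_distrib]
        exact Finset.sum_le_sum fun i _ => convex_sq (u i) (w i) hη0 hη1
    _ ≤ (1-s)⁻¹ * ((1-η) * (∑ i, ‖u i‖^2) + η * (ν^2 * ∑ i, ‖u i‖^2))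
          + (s⁻¹ * (η*γ)^2) * (∑ i, ‖h i‖^2) := by
        refine add_le_add_left (mul_le_mul_of_nonneg_left ?_ hinv) _
        exact add_le_add_right (mul_le_mul_of_nonneg_left hspec hη0.le) _
    _ ≤ (1 - (1 - ν ^ 2) * η / 2) * ∑ i, ‖u i‖ ^ 2
          + 2 * η * γ ^ 2 / (1 - ν ^ 2) * ∑ i, ‖h i‖ ^ 2 := by
        have e1 : (1-s)⁻¹ * ((1-η) * (∑ i, ‖u i‖^2) + η * (ν^2 * ∑ i, ‖u i‖^2))
            = ((1-s)⁻¹ * (1 - 2*s)) * ∑ i, ‖u i‖^2 := by rw [hs_def]; ring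
        have e2 : s⁻¹ * (η*γ)^2 = 2 * η * γ^2 / (1 - ν^2) := by
          rw [hs_def]; field_simp
        have hseq : 1 - (1 - ν ^ 2) * η / 2 = 1 - s := by rw [hs_def]; ring
        have hco : (1-s)⁻¹ * (1 - 2*s) ≤ 1 - s := by
          rw [inv_mul_eq_div, div_le_iff₀ h1s]
          have hexp : (1-s)*(1-s) = 1 - 2*s + s*s := by ring
          have hss : 0 ≤ s*s := mul_self_nonneg s
          linarith
        rw [e1, e2, hseq]
        exact add_le_add_left (mul_le_mul_of_nonneg_right hco hSu) _
end

section
/- Let W ∈ ℝ^{m×m} be symmetric with W𝟙 = 𝟙, and suppose 0 ≤ ν < 1 satisfies ‖Wv‖ ≤ ν‖v‖ for every v ∈ ℝ^m with Σ_i v_i = 0. Let γ > 0. For i = 1,…,m let x^i, g^i ∈ ℝ^d and set x̃^i = Σ_j W_{ij} x^j − γ g^i. Write x̄ = (1/m)Σ_i x^i. Then Σ_{i=1}^m ‖x̃^i − x^i‖² ≤ (3+ν²) Σ_{i=1}^m ‖x^i − x̄‖² + (2(1+ν²)/(1−ν²)) γ² Σ_{i=1}^m ‖g^i‖². -/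
open Finset

set_option maxHeartbeats 1000000 in
/-- **Bound on the step `x̃ⁱ − xⁱ`.**
With `x̃ⁱ = ∑ⱼ Wᵢⱼ xʲ − γ gⁱ`, one has
`∑ᵢ ‖x̃ⁱ − xⁱ‖² ≤ (3+ν²) ∑ᵢ ‖xⁱ − x̄‖² + (2(1+ν²)/(1−ν²)) γ² ∑ᵢ ‖gⁱ‖²`. -/
theorem step_norm_bound {m d : ℕ}
    (W : Matrix (Fin m) (Fin m) ℝ) (hWsym : W.IsSymm)
    (hWrow : ∀ i, ∑ j, W i j = 1)
    (ν : ℝ) (hν0 : 0 ≤ ν) (hν1 : ν < 1)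
    (hWspec : ∀ v : EuclideanSpace ℝ (Fin m), (∑ i, v i) = 0 →
      ‖Matrix.toEuclideanLin W v‖ ≤ ν * ‖v‖)
    (γ : ℝ) (hγ : 0 < γ)
    (x g xt : Fin m → EuclideanSpace ℝ (Fin d))
    (hxt : ∀ i, xt i = (∑ j, W i j • x j) - γ • g i) :
    ∑ i, ‖xt i - x i‖ ^ 2 ≤
      (3 + ν ^ 2) * ∑ i, ‖x i - (m : ℝ)⁻¹ • ∑ j, x j‖ ^ 2 +
        2 * (1 + ν ^ 2) / (1 - ν ^ 2) * γ ^ 2 * ∑ i, ‖g i‖ ^ 2 := by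
  set xbar : EuclideanSpace ℝ (Fin d) := (m : ℝ)⁻¹ • ∑ j, x j with hxbar
  set a : Fin m → EuclideanSpace ℝ (Fin d) := fun i => ∑ j, W i j • (x j - xbar) with ha
  set b : Fin m → EuclideanSpace ℝ (Fin d) := fun i => x i - xbar with hb
  -- rewrite a
  have ha' : ∀ i, a i = (∑ j, W i j • x j) - xbar := by
    intro i
    simp only [ha, smul_sub, Finset.sum_sub_distrib, ← Finset.sum_smul, hWrow i, one_smul]
  have hdiff : ∀ i, xt i - x i = (a i - γ • g i) - b i := by
    intro i
    rw [hxt i, ha' i]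
    simp only [hb]
    abel
  -- scalar aggregates
  set V2 : ℝ := ∑ i, ‖b i‖ ^ 2 with hV2
  set G2 : ℝ := ∑ i, ‖g i‖ ^ 2 with hG2
  set A2 : ℝ := ∑ i, ‖a i‖ ^ 2 with hA2
  have hV2nn : 0 ≤ V2 := Finset.sum_nonneg fun i _ => sq_nonneg _
  have hG2nn : 0 ≤ G2 := Finset.sum_nonneg fun i _ => sq_nonneg _
  have hA2nn : 0 ≤ A2 := Finset.sum_nonneg fun i _ => sq_nonneg _
  -- the spectral bound: A2 ≤ ν^2 * V2
  have hspec : A2 ≤ ν ^ 2 * V2 := by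
    set v : Fin d → EuclideanSpace ℝ (Fin m) := fun k => WithLp.toLp 2 (fun i => (x i - xbar) k) with hv
    have hxbark : ∀ k, xbar k = (m : ℝ)⁻¹ * ∑ i, x i k := by
      intro k
      have h1 : xbar k = (m : ℝ)⁻¹ * (∑ j, x j) k := rfl
      rw [h1, WithLp.ofLp_sum, Finset.sum_apply]
    have hv0 : ∀ k, ∑ i, v k i = 0 := by
      intro k
      have h1 : ∀ i, v k i = x i k - xbar k := fun i => rfl
      rcases Nat.eq_zero_or_pos m with hm | hm
      · subst hm; simp
      simp only [h1, Finset.sum_sub_distrib, Finset.sum_const, Finset.card_univ,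
        Fintype.card_fin, nsmul_eq_mul, hxbark k]
      rw [mul_inv_cancel_left₀ (by positivity : (m : ℝ) ≠ 0), sub_self]
    have hWv : ∀ k, ‖Matrix.toEuclideanLin W (v k)‖ ^ 2 ≤ ν ^ 2 * ‖v k‖ ^ 2 := by
      intro k
      have h1 := hWspec (v k) (hv0 k)
      calc ‖Matrix.toEuclideanLin W (v k)‖ ^ 2 ≤ (ν * ‖v k‖) ^ 2 :=
            pow_le_pow_left₀ (norm_nonneg _) h1 2
        _ = ν ^ 2 * ‖v k‖ ^ 2 := by ring
    have haik : ∀ i k, (a i) k = (Matrix.toEuclideanLin W (v k)) i := by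
      intro i k
      show (∑ j, W i j • (x j - xbar)) k = _
      rw [WithLp.ofLp_sum, Finset.sum_apply]
      rfl
    have hA2eq : A2 = ∑ k, ‖Matrix.toEuclideanLin W (v k)‖ ^ 2 := by
      simp only [hA2, PiLp.norm_sq_eq_of_L2, Real.norm_eq_abs, sq_abs]
      rw [Finset.sum_comm]
      exact Finset.sum_congr rfl fun k _ => Finset.sum_congr rfl fun i _ => by rw [haik i k]
    have hV2eq : V2 = ∑ k, ‖v k‖ ^ 2 := by
      simp only [hV2, PiLp.norm_sq_eq_of_L2, Real.norm_eq_abs, sq_abs]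
      rw [Finset.sum_comm]
    rw [hA2eq, hV2eq, Finset.mul_sum]
    exact Finset.sum_le_sum fun k _ => hWv k
  -- per-index bound
  have key : ∀ i, ‖xt i - x i‖ ^ 2 ≤
      2 * ‖b i‖ ^ 2 + 2 * ‖a i‖ ^ 2 + 2 * γ ^ 2 * ‖g i‖ ^ 2 + 4 * γ * (‖a i‖ * ‖g i‖) := by
    intro i
    have h1 : ‖xt i - x i‖ ≤ (‖a i‖ + γ * ‖g i‖) + ‖b i‖ := by
      rw [hdiff i]
      refine (norm_sub_le _ _).trans (add_le_add ?_ le_rfl)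
      refine (norm_sub_le _ _).trans ?_
      rw [norm_smul, Real.norm_eq_abs, abs_of_pos hγ]
    have h2 : 0 ≤ ‖xt i - x i‖ := norm_nonneg _
    nlinarith [sq_nonneg ((‖a i‖ + γ * ‖g i‖) - ‖b i‖), norm_nonneg (a i), norm_nonneg (b i),
      norm_nonneg (g i), hγ.le]
  set T : ℝ := ∑ i, ‖a i‖ * ‖g i‖ with hT
  have hsum : ∑ i, ‖xt i - x i‖ ^ 2 ≤ 2 * V2 + 2 * A2 + 2 * γ ^ 2 * G2 + 4 * γ * T := by
    calc ∑ i, ‖xt i - x i‖ ^ 2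
        ≤ ∑ i, (2 * ‖b i‖ ^ 2 + 2 * ‖a i‖ ^ 2 + 2 * γ ^ 2 * ‖g i‖ ^ 2
            + 4 * γ * (‖a i‖ * ‖g i‖)) := Finset.sum_le_sum fun i _ => key i
      _ = 2 * V2 + 2 * A2 + 2 * γ ^ 2 * G2 + 4 * γ * T := by
          simp only [Finset.sum_add_distrib, Finset.mul_sum, hV2, hA2, hG2, hT]
  -- square roots
  set V : ℝ := Real.sqrt V2 with hVdef
  set G : ℝ := Real.sqrt G2 with hGdef
  have hVnn : 0 ≤ V := Real.sqrt_nonneg _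
  have hGnn : 0 ≤ G := Real.sqrt_nonneg _
  have hVsq : V ^ 2 = V2 := Real.sq_sqrt hV2nn
  have hGsq : G ^ 2 = G2 := Real.sq_sqrt hG2nn
  have hAle : Real.sqrt A2 ≤ ν * V := by
    have h := Real.sqrt_le_sqrt hspec
    rwa [Real.sqrt_mul (sq_nonneg ν), Real.sqrt_sq hν0] at h
  -- Cauchy–Schwarz for the cross term
  have hCS : T ≤ Real.sqrt A2 * G := by
    have h1 := Finset.sum_mul_sq_le_sq_mul_sq Finset.univ (fun i => ‖a i‖) (fun i => ‖g i‖)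
    have h2 : 0 ≤ T :=
      Finset.sum_nonneg fun i _ => mul_nonneg (norm_nonneg _) (norm_nonneg _)
    have h3 : T ^ 2 ≤ (Real.sqrt A2 * G) ^ 2 := by
      rw [mul_pow, Real.sq_sqrt hA2nn, hGsq]
      exact h1
    have h4 : 0 ≤ Real.sqrt A2 * G := mul_nonneg (Real.sqrt_nonneg _) hGnn
    nlinarith
  have hcross : T ≤ ν * V * G :=
    hCS.trans (mul_le_mul_of_nonneg_right hAle hGnn)
  have h1mν : 0 < 1 - ν ^ 2 := by nlinarith
  -- put everything together
  have hstep : ∑ i, ‖xt i - x i‖ ^ 2 ≤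
      2 * V ^ 2 + 2 * (ν ^ 2 * V ^ 2) + 2 * γ ^ 2 * G ^ 2 + 4 * γ * (ν * V * G) := by
    have h4γ : 4 * γ * T ≤ 4 * γ * (ν * V * G) :=
      mul_le_mul_of_nonneg_left hcross (by positivity)
    have hA2' : A2 ≤ ν ^ 2 * V ^ 2 := by rw [hVsq]; exact hspec
    rw [hVsq, hGsq]
    linarith [hsum]
  rw [← hVsq, ← hGsq]
  refine hstep.trans ?_
  have hexp : (3 + ν ^ 2) * V ^ 2 + 2 * (1 + ν ^ 2) / (1 - ν ^ 2) * γ ^ 2 * G ^ 2 -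
      (2 * V ^ 2 + 2 * (ν ^ 2 * V ^ 2) + 2 * γ ^ 2 * G ^ 2 + 4 * γ * (ν * V * G)) =
      ((1 - ν ^ 2) * V - 2 * ν * γ * G) ^ 2 / (1 - ν ^ 2) := by
    field_simp
    ring
  have hpos : 0 ≤ ((1 - ν ^ 2) * V - 2 * ν * γ * G) ^ 2 / (1 - ν ^ 2) :=
    div_nonneg (sq_nonneg _) h1mν.le
  linarith
end

section
/- Let W ∈ ℝ^{m×m} be symmetric with W𝟙 = 𝟙 and all column sums equal to 1, and suppose 0 < ν < 1 satisfies ‖Wv‖ ≤ ν‖v‖ for every v ∈ ℝ^m with Σ_i v_i = 0. For i = 1,…,m let w^i, u^i, u^{i,+} ∈ ℝ^d and set w^{i,+} = Σ_{j=1}^m W_{ij}(w^j + u^{j,+} − u^j). Write w̄ = (1/m)Σ_i w^i and w̄^+ = (1/m)Σ_i w^{i,+}. Then Σ_{i=1}^m ‖w^{i,+} − w̄^+‖² ≤ ν Σ_{i=1}^m ‖w^i − w̄‖² + (ν²/(1−ν)) Σ_{i=1}^m ‖u^{i,+} − u^i‖². -/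
open Finset

lemma esq_aux {n : ℕ} (x : EuclideanSpace ℝ (Fin n)) : ‖x‖^2 = ∑ i, (x i)^2 := by
  rw [EuclideanSpace.norm_eq, Real.sq_sqrt (by positivity)]
  simp [sq_abs]

lemma key_ineq_aux (ν α β : ℝ) (hν0 : 0 < ν) (hν1 : ν < 1) :
    ν^2*(α+β)^2 ≤ ν*α^2 + ν^2/(1-ν)*β^2 := by
  have h1 : 0 < 1 - ν := by linarith
  have hγ : ν^2/(1-ν)*(1-ν) = ν^2 := div_mul_cancel₀ _ h1.ne'
  nlinarith [sq_nonneg ((1-ν)*α - ν*β), mul_pos hν0 h1, sq_nonneg (α+β)]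

lemma var_aux {m : ℕ} (x : Fin m → ℝ) :
    ∑ i, (x i - (m:ℝ)⁻¹ * ∑ j, x j)^2 ≤ ∑ i, x i ^2 := by
  rcases Nat.eq_zero_or_pos m with h|h
  · subst h; simp
  have hm : (0:ℝ) < m := by exact_mod_cast h
  set S := ∑ j, x j
  have : ∑ i, (x i - (m:ℝ)⁻¹*S)^2 = ∑ i, x i^2 - (m:ℝ)⁻¹*S^2 := by
    simp only [sub_sq]
    rw [Finset.sum_add_distrib, Finset.sum_sub_distrib, ← Finset.sum_mul, ← Finset.mul_sum]
    simp only [Finset.sum_const, Finset.card_univ, Fintype.card_fin, nsmul_eq_mul]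
    field_simp
    ring
  rw [this]
  nlinarith [sq_nonneg S, inv_nonneg.mpr hm.le]


/-- **Tracking-error recursion.**
With `wⁱ⁺ = ∑ⱼ Wᵢⱼ (wʲ + uʲ⁺ − uʲ)`, one has
`∑ᵢ ‖wⁱ⁺ − w̄⁺‖² ≤ ν ∑ᵢ ‖wⁱ − w̄‖² + (ν²/(1−ν)) ∑ᵢ ‖uⁱ⁺ − uⁱ‖²`. -/
theorem tracking_recursion {m d : ℕ}
    (W : Matrix (Fin m) (Fin m) ℝ) (hWsym : W.IsSymm)
    (hWrow : ∀ i, ∑ j, W i j = 1) (hWcol : ∀ j, ∑ i, W i j = 1)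
    (ν : ℝ) (hν0 : 0 < ν) (hν1 : ν < 1)
    (hWspec : ∀ v : EuclideanSpace ℝ (Fin m), (∑ i, v i) = 0 →
      ‖Matrix.toEuclideanLin W v‖ ≤ ν * ‖v‖)
    (w u up wp : Fin m → EuclideanSpace ℝ (Fin d))
    (hwp : ∀ i, wp i = ∑ j, W i j • (w j + up j - u j)) :
    ∑ i, ‖wp i - (m : ℝ)⁻¹ • ∑ j, wp j‖ ^ 2 ≤
      ν * ∑ i, ‖w i - (m : ℝ)⁻¹ • ∑ j, w j‖ ^ 2 +
        ν ^ 2 / (1 - ν) * ∑ i, ‖up i - u i‖ ^ 2 := by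
  have h1 : 0 < 1 - ν := by linarith
  have hγ0 : 0 ≤ ν^2/(1-ν) := by positivity
  rcases Nat.eq_zero_or_pos m with hm0|hm0
  · subst hm0
    simp
  have hm : (0:ℝ) < m := by exact_mod_cast hm0
  -- sum apply on EuclideanSpace
  have sum_apply : ∀ {n : ℕ} (f : Fin m → EuclideanSpace ℝ (Fin n)) (k : Fin n),
      (∑ j, f j) k = ∑ j, f j k := by
    intro n f k
    rw [WithLp.ofLp_sum, Finset.sum_apply]
  set Δ : Fin m → EuclideanSpace ℝ (Fin d) := fun i => up i - u i with hΔ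
  -- coordinate deviation vectors
  set a : Fin d → EuclideanSpace ℝ (Fin m) :=
    fun k => WithLp.toLp 2 (fun i => w i k - (m:ℝ)⁻¹ * ∑ j, w j k) with ha
  set b : Fin d → EuclideanSpace ℝ (Fin m) :=
    fun k => WithLp.toLp 2 (fun i => Δ i k - (m:ℝ)⁻¹ * ∑ j, Δ j k) with hb
  have hsum_a : ∀ k, ∑ i, a k i = 0 := by
    intro k
    simp only [ha, PiLp.toLp_apply, Finset.sum_sub_distrib, Finset.sum_const, Finset.card_univ,
      Fintype.card_fin, nsmul_eq_mul]
    field_simp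
    ring
  have hsum_b : ∀ k, ∑ i, b k i = 0 := by
    intro k
    simp only [hb, PiLp.toLp_apply, Finset.sum_sub_distrib, Finset.sum_const, Finset.card_univ,
      Fintype.card_fin, nsmul_eq_mul]
    field_simp
    ring
  -- wp coordinate formula
  have hwpk : ∀ i k, wp i k = ∑ j, W i j * (w j k + Δ j k) := by
    intro i k
    rw [hwp i, sum_apply]
    refine Finset.sum_congr rfl fun j _ => ?_
    show W i j * (w j k + up j k - u j k) = W i j * (w j k + (up j k - u j k))
    ring
  have hwpbar : ∀ k, (∑ j, wp j) k = ∑ j, (w j k + Δ j k) := by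
    intro k
    rw [sum_apply]
    simp only [hwpk]
    rw [Finset.sum_comm]
    refine Finset.sum_congr rfl fun j _ => ?_
    rw [← Finset.sum_mul, hWcol, one_mul]
  -- key coordinate identity
  have hkey : ∀ i k, (wp i - (m:ℝ)⁻¹ • ∑ j, wp j) k
      = Matrix.toEuclideanLin W (a k + b k) i := by
    intro i k
    have happ : Matrix.toEuclideanLin W (a k + b k) i
        = ∑ j, W i j * (a k j + b k j) := rfl
    rw [happ]
    have : (wp i - (m:ℝ)⁻¹ • ∑ j, wp j) k = wp i k - (m:ℝ)⁻¹ * (∑ j, wp j) k := rfl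
    rw [this, hwpk, hwpbar]
    have expand : ∀ j, W i j * (a k j + b k j)
        = W i j * (w j k + Δ j k)
          - W i j * ((m:ℝ)⁻¹ * ∑ l, w l k + (m:ℝ)⁻¹ * ∑ l, Δ l k) := by
      intro j; simp only [ha, hb, PiLp.toLp_apply]; ring
    rw [Finset.sum_congr rfl fun j _ => expand j, Finset.sum_sub_distrib,
      ← Finset.sum_mul, hWrow, one_mul, Finset.sum_add_distrib, mul_add]
  -- per-coordinate bound
  have hperk : ∀ k, ‖Matrix.toEuclideanLin W (a k + b k)‖^2
      ≤ ν * ‖a k‖^2 + ν^2/(1-ν) * ‖b k‖^2 := by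
    intro k
    have hz : ∑ i, (a k + b k) i = 0 := by
      have : ∀ i, (a k + b k) i = a k i + b k i := fun i => rfl
      simp only [this, Finset.sum_add_distrib, hsum_a, hsum_b, add_zero]
    have h2 : ‖Matrix.toEuclideanLin W (a k + b k)‖ ≤ ν * (‖a k‖ + ‖b k‖) := by
      refine (hWspec _ hz).trans ?_
      exact mul_le_mul_of_nonneg_left (norm_add_le _ _) hν0.le
    have h3 : ‖Matrix.toEuclideanLin W (a k + b k)‖^2 ≤ (ν * (‖a k‖ + ‖b k‖))^2 :=
      pow_le_pow_left₀ (norm_nonneg _) h2 2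
    calc ‖Matrix.toEuclideanLin W (a k + b k)‖^2
        ≤ ν^2 * (‖a k‖ + ‖b k‖)^2 := by rw [mul_pow] at h3; exact h3
      _ ≤ ν * ‖a k‖^2 + ν^2/(1-ν) * ‖b k‖^2 := key_ineq_aux ν _ _ hν0 hν1
  -- assemble
  have LHS_eq : ∑ i, ‖wp i - (m:ℝ)⁻¹ • ∑ j, wp j‖^2
      = ∑ k, ‖Matrix.toEuclideanLin W (a k + b k)‖^2 := by
    simp only [esq_aux]
    rw [Finset.sum_comm]
    exact Finset.sum_congr rfl fun k _ => Finset.sum_congr rfl fun i _ => by rw [hkey]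
  have A_eq : ∑ i, ‖w i - (m:ℝ)⁻¹ • ∑ j, w j‖^2 = ∑ k, ‖a k‖^2 := by
    simp only [esq_aux]
    rw [Finset.sum_comm]
    refine Finset.sum_congr rfl fun k _ => Finset.sum_congr rfl fun i _ => ?_
    have : (w i - (m:ℝ)⁻¹ • ∑ j, w j) k = w i k - (m:ℝ)⁻¹ * (∑ j, w j) k := rfl
    rw [this, sum_apply]
  have B_le : ∑ k, ‖b k‖^2 ≤ ∑ i, ‖up i - u i‖^2 := by
    simp only [esq_aux]
    conv_rhs => rw [Finset.sum_comm]
    refine Finset.sum_le_sum fun k _ => ?_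
    simpa [hb, hΔ] using var_aux (fun i => Δ i k)
  rw [LHS_eq, A_eq]
  calc ∑ k, ‖Matrix.toEuclideanLin W (a k + b k)‖^2
      ≤ ∑ k, (ν * ‖a k‖^2 + ν^2/(1-ν) * ‖b k‖^2) := Finset.sum_le_sum fun k _ => hperk k
    _ = ν * ∑ k, ‖a k‖^2 + ν^2/(1-ν) * ∑ k, ‖b k‖^2 := by
        rw [Finset.sum_add_distrib, Finset.mul_sum, Finset.mul_sum]
    _ ≤ _ := by
        have := mul_le_mul_of_nonneg_left B_le hγ0
        linarith
end

section
/- Let (Ω, μ) be a probability space, f : ℝ^d → ℝ, and G : ℝ^d × Ω → ℝ^d a stochastic gradient oracle such that for every x: ∫ G(x,ω) dμ(ω) = ∇f(x), ∫ ‖G(x,ω) − ∇f(x)‖² dμ(ω) ≤ σ², and for μ-almost every ω the map x ↦ G(x,ω) is L-Lipschitz. Fix x, x⁺, u ∈ ℝ^d and β ∈ (0,1], and define the momentum-based variance-reduced estimator u⁺(ω) = G(x⁺,ω) + (1−β)(u − G(x,ω)). Then ∫ ‖u⁺(ω) − ∇f(x⁺)‖² dμ(ω) ≤ (1−β)‖u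 − ∇f(x)‖² + 2β²σ² + 2L²‖x⁺ − x‖². -/
open MeasureTheory RealInnerProductSpace

set_option maxHeartbeats 2000000 in
/-- **STORM-type variance recursion (single agent).**
For an unbiased stochastic gradient oracle `G` of `f` with variance at most `σ²`
whose realizations are a.e. `L`-Lipschitz in `x`, and momentum parameter
`β ∈ (0,1]`, the estimator `u⁺(ω) = G(x⁺,ω) + (1−β)(u − G(x,ω))` satisfies
`E‖u⁺ − ∇f(x⁺)‖² ≤ (1−β)‖u − ∇f(x)‖² + 2β²σ² + 2L²‖x⁺ − x‖²`. -/
theorem storm_variance_recursion {d : ℕ}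
    (Ω : Type) [MeasurableSpace Ω] (μ : Measure Ω) [IsProbabilityMeasure μ]
    (f : EuclideanSpace ℝ (Fin d) → ℝ) (hf : Differentiable ℝ f)
    (G : EuclideanSpace ℝ (Fin d) → Ω → EuclideanSpace ℝ (Fin d))
    (σ L : ℝ) (hσ : 0 ≤ σ) (hL : 0 ≤ L)
    (hInt : ∀ x, Integrable (G x) μ)
    (hUnbiased : ∀ x, ∫ ω, G x ω ∂μ = gradient f x)
    (hVar : ∀ x, ∫ ω, ‖G x ω - gradient f x‖ ^ 2 ∂μ ≤ σ ^ 2)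
    (hLip : ∀ᵐ ω ∂μ, ∀ x y, ‖G x ω - G y ω‖ ≤ L * ‖x - y‖)
    (x xp u : EuclideanSpace ℝ (Fin d))
    (β : ℝ) (hβ0 : 0 < β) (hβ1 : β ≤ 1) :
    ∫ ω, ‖G xp ω + (1 - β) • (u - G x ω) - gradient f xp‖ ^ 2 ∂μ ≤
      (1 - β) * ‖u - gradient f x‖ ^ 2 + 2 * β ^ 2 * σ ^ 2 +
        2 * L ^ 2 * ‖xp - x‖ ^ 2 := by
  set g := gradient f x with hg
  set gp := gradient f xp with hgp
  set r := ‖xp - x‖ with hr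
  have hr0 : 0 ≤ r := norm_nonneg _
  -- RHS is nonnegative
  have hRHS : 0 ≤ (1 - β) * ‖u - g‖ ^ 2 + 2 * β ^ 2 * σ ^ 2 + 2 * L ^ 2 * r ^ 2 := by
    have h1 : 0 ≤ 1 - β := by linarith
    positivity
  set V : EuclideanSpace ℝ (Fin d) := (1 - β) • (u - g) with hV
  set Y : Ω → EuclideanSpace ℝ (Fin d) := fun ω => G xp ω - gp with hY
  set Z : Ω → EuclideanSpace ℝ (Fin d) := fun ω => G xp ω - G x ω with hZ
  set m : EuclideanSpace ℝ (Fin d) := gp - g with hm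
  set W : Ω → EuclideanSpace ℝ (Fin d) := fun ω => β • Y ω + (1 - β) • (Z ω - m) with hW
  have hdecomp : ∀ ω, G xp ω + (1 - β) • (u - G x ω) - gp = V + W ω := by
    intro ω
    simp only [hV, hW, hY, hZ, hm]
    module
  by_cases hF : Integrable (fun ω => ‖G xp ω + (1 - β) • (u - G x ω) - gp‖ ^ 2) μ
  swap
  · rw [integral_undef hF]; exact hRHS
  -- integrabilities and measurabilities
  have hGxp := (hInt xp)
  have hGx := (hInt x)
  have hYi : Integrable Y μ := hGxp.sub (integrable_const _)
  have hZi : Integrable Z μ := hGxp.sub hGx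
  have hWi : Integrable W μ :=
    ((hYi.smul β).add ((hZi.sub (integrable_const _)).smul (1 - β)))
  have hYm : AEStronglyMeasurable Y μ := hYi.aestronglyMeasurable
  have hZm : AEStronglyMeasurable Z μ := hZi.aestronglyMeasurable
  have hWm : AEStronglyMeasurable W μ := hWi.aestronglyMeasurable
  -- a.e. bound on Z
  have hZbdd : ∀ᵐ ω ∂μ, ‖Z ω‖ ≤ L * r := by
    filter_upwards [hLip] with ω h using h xp x
  -- Integrability of ‖Z‖², ‖Z-m‖²
  have hZ2 : Integrable (fun ω => ‖Z ω‖ ^ 2) μ := by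
    refine Integrable.mono' (integrable_const ((L * r) ^ 2)) (hZm.norm.pow 2) ?_
    filter_upwards [hZbdd] with ω h
    have : 0 ≤ ‖Z ω‖ := norm_nonneg _
    rw [Real.norm_eq_abs, abs_of_nonneg (by positivity)]
    nlinarith
  have hZm2 : Integrable (fun ω => ‖Z ω - m‖ ^ 2) μ := by
    refine Integrable.mono' (integrable_const ((L * r + ‖m‖) ^ 2))
      ((hZm.sub aestronglyMeasurable_const).norm.pow 2) ?_
    filter_upwards [hZbdd] with ω h
    have h1 : ‖Z ω - m‖ ≤ L * r + ‖m‖ := (norm_sub_le _ _).trans (by linarith)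
    rw [Real.norm_eq_abs, abs_of_nonneg (by positivity)]
    nlinarith [norm_nonneg (Z ω - m)]
  -- Integrability of ‖Y‖²
  have hY2 : Integrable (fun ω => ‖Y ω‖ ^ 2) μ := by
    have key : ∀ᵐ ω ∂μ, ‖(fun ω => ‖Y ω‖ ^ 2) ω‖ ≤
        (fun ω => β⁻¹ ^ 2 * (3 * ‖G xp ω + (1 - β) • (u - G x ω) - gp‖ ^ 2
          + 3 * ‖V‖ ^ 2 + 3 * ((1 - β) * ‖Z ω - m‖) ^ 2)) ω := by
      filter_upwards [] with ω
      have hid : β • Y ω = (G xp ω + (1 - β) • (u - G x ω) - gp) - V - (1 - β) • (Z ω - m) := by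
        rw [hdecomp ω, hW]; module
      have h1 : β * ‖Y ω‖ ≤ ‖G xp ω + (1 - β) • (u - G x ω) - gp‖ + ‖V‖
          + (1 - β) * ‖Z ω - m‖ := by
        have := norm_sub_le ((G xp ω + (1 - β) • (u - G x ω) - gp) - V) ((1 - β) • (Z ω - m))
        have h2 := norm_sub_le (G xp ω + (1 - β) • (u - G x ω) - gp) V
        rw [← hid] at this
        rw [norm_smul, Real.norm_eq_abs, abs_of_nonneg hβ0.le] at this
        rw [norm_smul, Real.norm_eq_abs, abs_of_nonneg (by linarith : (0:ℝ) ≤ 1 - β)] at this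
        linarith
      have hβ2 : 0 < β ^ 2 := by positivity
      rw [Real.norm_eq_abs, abs_of_nonneg (by positivity)]
      have := sq_nonneg (‖G xp ω + (1 - β) • (u - G x ω) - gp‖ - ‖V‖)
      have := sq_nonneg (‖G xp ω + (1 - β) • (u - G x ω) - gp‖ - (1 - β) * ‖Z ω - m‖)
      have := sq_nonneg (‖V‖ - (1 - β) * ‖Z ω - m‖)
      have hsq : (β * ‖Y ω‖) * (β * ‖Y ω‖) ≤
          (‖G xp ω + (1 - β) • (u - G x ω) - gp‖ + ‖V‖ + (1 - β) * ‖Z ω - m‖)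
          * (‖G xp ω + (1 - β) • (u - G x ω) - gp‖ + ‖V‖ + (1 - β) * ‖Z ω - m‖) :=
        mul_self_le_mul_self (by positivity) h1
      have hb : (β * ‖Y ω‖) ^ 2 ≤ 3 * ‖G xp ω + (1 - β) • (u - G x ω) - gp‖ ^ 2
          + 3 * ‖V‖ ^ 2 + 3 * ((1 - β) * ‖Z ω - m‖) ^ 2 := by
        nlinarith [hsq]
      have hinv : β⁻¹ ^ 2 * (β * ‖Y ω‖) ^ 2 = ‖Y ω‖ ^ 2 := by
        field_simp
      calc ‖Y ω‖ ^ 2 = β⁻¹ ^ 2 * (β * ‖Y ω‖) ^ 2 := hinv.symm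
        _ ≤ _ := by
            apply mul_le_mul_of_nonneg_left hb (by positivity)
    refine Integrable.mono' ?_ (hYm.norm.pow 2) key
    exact (((hF.const_mul 3).add (integrable_const _)).add
      ((hZm2.const_mul (3*(1-β)^2)).congr (by
        filter_upwards [] with ω; ring))).const_mul _
  -- Integrability of ‖W‖²
  have hW2 : Integrable (fun ω => ‖W ω‖ ^ 2) μ := by
    have hdom : Integrable (fun ω => 2 * β ^ 2 * ‖Y ω‖ ^ 2
        + 2 * (1 - β) ^ 2 * ‖Z ω - m‖ ^ 2) μ :=
      (hY2.const_mul (2 * β ^ 2)).add (hZm2.const_mul (2 * (1 - β) ^ 2))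
    refine Integrable.mono' hdom (hWm.norm.pow 2) ?_
    filter_upwards [] with ω
    rw [Real.norm_eq_abs, abs_of_nonneg (by positivity)]
    have h1 : ‖W ω‖ ≤ β * ‖Y ω‖ + (1 - β) * ‖Z ω - m‖ := by
      refine (norm_add_le _ _).trans ?_
      rw [norm_smul, norm_smul, Real.norm_eq_abs, Real.norm_eq_abs,
        abs_of_nonneg hβ0.le, abs_of_nonneg (by linarith : (0:ℝ) ≤ 1 - β)]
    nlinarith [mul_self_le_mul_self (norm_nonneg (W ω)) h1,
      sq_nonneg (β * ‖Y ω‖ - (1 - β) * ‖Z ω - m‖)]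
  -- means
  have hEY : ∫ ω, Y ω ∂μ = 0 := by
    rw [hY]
    rw [integral_sub hGxp (integrable_const _), hUnbiased xp, integral_const]
    simp [hgp]
  have hEZ : ∫ ω, Z ω ∂μ = m := by
    rw [hZ]
    rw [integral_sub hGxp hGx, hUnbiased xp, hUnbiased x]
  have hEW : ∫ ω, W ω ∂μ = 0 := by
    have h1 : Integrable (fun ω => β • Y ω) μ := hYi.smul β
    have h2 : Integrable (fun ω => (1 - β) • (Z ω - m)) μ :=
      (hZi.sub (integrable_const _)).smul (1 - β)
    rw [hW]
    rw [integral_add h1 h2, integral_smul, integral_smul, hEY,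
      integral_sub hZi (integrable_const _), hEZ, integral_const]
    simp
  -- Main expansion: ∫ F = ‖V‖² + ∫ ‖W‖²
  have hexp : ∫ ω, ‖G xp ω + (1 - β) • (u - G x ω) - gp‖ ^ 2 ∂μ
      = ‖V‖ ^ 2 + ∫ ω, ‖W ω‖ ^ 2 ∂μ := by
    have hptw : ∀ ω, ‖G xp ω + (1 - β) • (u - G x ω) - gp‖ ^ 2
        = ‖V‖ ^ 2 + 2 * ⟪V, W ω⟫ + ‖W ω‖ ^ 2 := by
      intro ω; rw [hdecomp ω, norm_add_sq_real]
    have hib : Integrable (fun ω => 2 * ⟪V, W ω⟫) μ := (hWi.const_inner V).const_mul 2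
    have hia : Integrable (fun ω => ‖V‖ ^ 2 + 2 * ⟪V, W ω⟫) μ := (integrable_const _).add hib
    rw [integral_congr_ae (Filter.Eventually.of_forall hptw)]
    rw [integral_add hia hW2, integral_add (integrable_const _) hib,
      integral_const, integral_const_mul, integral_inner hWi, hEW]
    simp
  rw [hexp]
  -- bound ∫‖Z-m‖²
  have hEZ2 : ∫ ω, ‖Z ω‖ ^ 2 ∂μ ≤ L ^ 2 * r ^ 2 := by
    calc ∫ ω, ‖Z ω‖ ^ 2 ∂μ ≤ ∫ _ω, (L * r) ^ 2 ∂μ := by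
          refine integral_mono_of_nonneg (Filter.Eventually.of_forall fun ω => by positivity)
            (integrable_const _) ?_
          filter_upwards [hZbdd] with ω h
          nlinarith [norm_nonneg (Z ω)]
      _ = L ^ 2 * r ^ 2 := by rw [integral_const]; simp; ring
  have hZmE : ∫ ω, ‖Z ω - m‖ ^ 2 ∂μ ≤ L ^ 2 * r ^ 2 := by
    have hpt : ∀ ω, ‖Z ω - m‖ ^ 2 = ‖Z ω‖ ^ 2 - 2 * ⟪m, Z ω⟫ + ‖m‖ ^ 2 := by
      intro ω; rw [norm_sub_sq_real, real_inner_comm]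
    have hic : Integrable (fun ω => 2 * ⟪m, Z ω⟫) μ := (hZi.const_inner m).const_mul 2
    have hid2 : Integrable (fun ω => ‖Z ω‖ ^ 2 - 2 * ⟪m, Z ω⟫) μ := hZ2.sub hic
    rw [integral_congr_ae (Filter.Eventually.of_forall hpt)]
    rw [integral_add hid2 (integrable_const _), integral_sub hZ2 hic,
      integral_const_mul, integral_inner hZi, hEZ, integral_const,
      real_inner_self_eq_norm_sq]
    simp only [measure_univ, ENNReal.toReal_one, smul_eq_mul, one_mul, probReal_univ]
    nlinarith [sq_nonneg ‖m‖]
  -- bound ∫‖W‖²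
  have hWE : ∫ ω, ‖W ω‖ ^ 2 ∂μ ≤ 2 * β ^ 2 * σ ^ 2 + 2 * (1 - β) ^ 2 * (L ^ 2 * r ^ 2) := by
    have step : ∫ ω, ‖W ω‖ ^ 2 ∂μ
        ≤ ∫ ω, (2 * β ^ 2 * ‖Y ω‖ ^ 2 + 2 * (1 - β) ^ 2 * ‖Z ω - m‖ ^ 2) ∂μ := by
      refine integral_mono_of_nonneg (Filter.Eventually.of_forall fun ω => by positivity)
        ((hY2.const_mul _).add (hZm2.const_mul _)) ?_
      filter_upwards [] with ω
      have h1 : ‖W ω‖ ≤ β * ‖Y ω‖ + (1 - β) * ‖Z ω - m‖ := by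
        refine (norm_add_le _ _).trans ?_
        rw [norm_smul, norm_smul, Real.norm_eq_abs, Real.norm_eq_abs,
          abs_of_nonneg hβ0.le, abs_of_nonneg (by linarith : (0:ℝ) ≤ 1 - β)]
      nlinarith [norm_nonneg (W ω), sq_nonneg (β * ‖Y ω‖ - (1 - β) * ‖Z ω - m‖),
        mul_nonneg hβ0.le (norm_nonneg (Y ω)),
        mul_nonneg (by linarith : (0:ℝ) ≤ 1 - β) (norm_nonneg (Z ω - m))]
    rw [integral_add (hY2.const_mul _) (hZm2.const_mul _), integral_const_mul,
      integral_const_mul] at step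
    have hYE : ∫ ω, ‖Y ω‖ ^ 2 ∂μ ≤ σ ^ 2 := hVar xp
    nlinarith [sq_nonneg (1 - β)]
  -- finish
  have hVn : ‖V‖ ^ 2 = (1 - β) ^ 2 * ‖u - g‖ ^ 2 := by
    rw [hV, norm_smul, Real.norm_eq_abs, abs_of_nonneg (by linarith : (0:ℝ) ≤ 1 - β)]
    ring
  rw [hVn]
  have h2 : (1 - β) ^ 2 ≤ 1 - β := by nlinarith
  have h3 : (1 - β) ^ 2 ≤ 1 := by nlinarith
  have h4 := mul_le_mul_of_nonneg_right h2 (sq_nonneg ‖u - g‖)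
  have h5 : 2 * (1 - β) ^ 2 * (L ^ 2 * r ^ 2) ≤ 2 * (L ^ 2 * r ^ 2) := by
    nlinarith [mul_nonneg (sq_nonneg L) (sq_nonneg r)]
  nlinarith [hWE]
end

section
/- For i = 1,…,m let (Ω_i, μ_i) be probability spaces, f^i : ℝ^d → ℝ, and G^i : ℝ^d × Ω_i → ℝ^d stochastic gradient oracles such that for every x: ∫ G^i(x,ω) dμ_i(ω) = ∇f^i(x), ∫ ‖G^i(x,ω) − ∇f^i(x)‖² dμ_i(ω) ≤ σ², and for μ_i-almost every ω the map x ↦ G^i(x,ω) is L-Lipschitz. Fix x^i, x^{i,+}, u^i ∈ ℝ^d and β ∈ (0,1], and for ω = (ω_1,…,ω_m) drawn from the product measure μ_1 ⊗ ⋯ ⊗ μ_m define u^{i,+}(ω) = G^i(x^{i,+},ω_i) + (1−β)(u^i − G^i(x^i,ω_i)). Write ū = (1/m)Σ_i u^i, ū⁺(ω) = (1/m)Σ_i u^{i,+}(ω), and ∇f(x)‾ = (1/m)Σ_i ∇f^i(x^i), ∇f(x⁺)‾ = (1/m)Σ_i ∇f^i(x^{i,+}). Then E_{ω}‖ū⁺(ω)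 − ∇f(x⁺)‾‖² ≤ (1−β)‖ū − ∇f(x)‾‖² + 2β²σ²/m + (2L²/m²) Σ_{i=1}^m ‖x^{i,+} − x^i‖². -/
set_option linter.unusedSectionVars false
set_option linter.unusedVariables false

open MeasureTheory Finset
open scoped RealInnerProductSpace


section Aux

variable {ι : Type*} [Fintype ι] [DecidableEq ι] {α : ι → Type*} [∀ i, MeasurableSpace (α i)]
  (μ : ∀ i, Measure (α i)) [∀ i, IsProbabilityMeasure (μ i)]

lemma pi_map_eval (i : ι) :
    MeasurePreserving (fun ω : ∀ j, α j => ω i) (Measure.pi μ) (μ i) := by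
  refine ⟨measurable_pi_apply i, ?_⟩
  ext s hs
  rw [Measure.map_apply (measurable_pi_apply i) hs]
  have h1 : (fun ω : ∀ j, α j => ω i) ⁻¹' s
      = Set.pi Set.univ (Function.update (fun _ => Set.univ) i s) := Set.eval_preimage
  rw [h1, Measure.pi_pi, ← Finset.mul_prod_erase Finset.univ _ (Finset.mem_univ i)]
  rw [Finset.prod_congr rfl (fun j hj => ?_), Finset.prod_const_one]
  · simp
  · rw [Function.update_of_ne (Finset.ne_of_mem_erase hj)]
    simp

variable {F : Type*} [NormedAddCommGroup F]

lemma integrable_eval_comp {i : ι} {φ : α i → F}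
    (hφ : Integrable φ (μ i)) : Integrable (fun ω : ∀ j, α j => φ (ω i)) (Measure.pi μ) := by
  have h := pi_map_eval μ i
  have h1 : AEStronglyMeasurable φ (Measure.map (fun ω : ∀ j, α j => ω i) (Measure.pi μ)) := by
    rw [h.map_eq]; exact hφ.aestronglyMeasurable
  exact (integrable_map_measure h1 h.measurable.aemeasurable).mp (by rw [h.map_eq]; exact hφ)

lemma integral_eval_comp [NormedSpace ℝ F] {i : ι} {φ : α i → F}
    (hφ : AEStronglyMeasurable φ (μ i)) :
    ∫ ω, φ (ω i) ∂(Measure.pi μ) = ∫ a, φ a ∂(μ i) := by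
  have h := pi_map_eval μ i
  rw [← h.map_eq, integral_map h.measurable.aemeasurable (by rw [h.map_eq]; exact hφ)]

end Aux


section Aux2

variable {ι : Type*} [Fintype ι] [DecidableEq ι] {α : ι → Type*} [∀ i, MeasurableSpace (α i)]
  (μ : ∀ i, Measure (α i)) [∀ i, IsProbabilityMeasure (μ i)]

lemma pi_map_eval_pair {i j : ι} (hij : i ≠ j) :
    Measure.map (fun ω : ∀ k, α k => (ω i, ω j)) (Measure.pi μ) = (μ i).prod (μ j) := by
  refine (Measure.prod_eq fun s t hs ht => ?_).symm
  rw [Measure.map_apply ((measurable_pi_apply i).prodMk (measurable_pi_apply j)) (hs.prod ht)]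
  have h1 : (fun ω : ∀ k, α k => (ω i, ω j)) ⁻¹' (s ×ˢ t) =
      Set.pi Set.univ (Function.update (Function.update (fun _ => Set.univ) i s) j t) := by
    ext ω
    simp only [Set.mem_preimage, Set.mem_prod, Set.mem_pi, Set.mem_univ, true_implies]
    constructor
    · rintro ⟨h1, h2⟩ k
      rcases eq_or_ne k j with rfl | hkj
      · simpa using h2
      · rw [Function.update_of_ne hkj]
        rcases eq_or_ne k i with rfl | hki
        · simpa using h1
        · simp [Function.update_of_ne hki]
    · intro h
      refine ⟨?_, ?_⟩
      · have := h i
        rwa [Function.update_of_ne hij, Function.update_self] at this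
      · have := h j
        rwa [Function.update_self] at this
  rw [h1, Measure.pi_pi, ← Finset.mul_prod_erase Finset.univ _ (Finset.mem_univ j),
    ← Finset.mul_prod_erase _ _ (Finset.mem_erase.mpr ⟨hij, Finset.mem_univ i⟩)]
  rw [Finset.prod_congr rfl (fun k hk => ?_), Finset.prod_const_one]
  · rw [Function.update_self, Function.update_of_ne hij, Function.update_self]
    ring
  · obtain ⟨hki, hkj⟩ : k ≠ i ∧ k ≠ j := by
      have h1 := Finset.mem_erase.mp hk
      have h2 := Finset.mem_erase.mp h1.2
      exact ⟨h1.1, h2.1⟩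
    rw [Function.update_of_ne hkj, Function.update_of_ne hki]
    simp

variable {E : Type*} [NormedAddCommGroup E] [InnerProductSpace ℝ E] [CompleteSpace E]

lemma integrable_inner_pair {i j : ι} (hij : i ≠ j) {Di : α i → E} {Dj : α j → E}
    (hi : Integrable Di (μ i)) (hj : Integrable Dj (μ j)) :
    Integrable (fun z : α i × α j => ⟪Di z.1, Dj z.2⟫) ((μ i).prod (μ j)) := by
  have hg : AEStronglyMeasurable (fun z : α i × α j => ⟪Di z.1, Dj z.2⟫) ((μ i).prod (μ j)) :=
    (hi.aestronglyMeasurable.comp_fst).inner (hj.aestronglyMeasurable.comp_snd)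
  have hmul : Integrable (fun z : α i × α j => ‖Di z.1‖ * ‖Dj z.2‖) ((μ i).prod (μ j)) :=
    hi.norm.mul_prod hj.norm
  refine hmul.mono' hg ?_
  filter_upwards with z
  simpa using abs_real_inner_le_norm (Di z.1) (Dj z.2)

lemma integrable_inner_eval_ne {i j : ι} (hij : i ≠ j) {Di : α i → E} {Dj : α j → E}
    (hi : Integrable Di (μ i)) (hj : Integrable Dj (μ j)) :
    Integrable (fun ω : ∀ k, α k => ⟪Di (ω i), Dj (ω j)⟫) (Measure.pi μ) := by
  have hT : Measurable fun ω : ∀ k, α k => (ω i, ω j) :=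
    (measurable_pi_apply i).prodMk (measurable_pi_apply j)
  have h1 : AEStronglyMeasurable (fun z : α i × α j => ⟪Di z.1, Dj z.2⟫)
      (Measure.map (fun ω : ∀ k, α k => (ω i, ω j)) (Measure.pi μ)) := by
    rw [pi_map_eval_pair μ hij]
    exact (hi.aestronglyMeasurable.comp_fst).inner (hj.aestronglyMeasurable.comp_snd)
  exact (integrable_map_measure h1 hT.aemeasurable).mp
    (by rw [pi_map_eval_pair μ hij]; exact integrable_inner_pair μ hij hi hj)

lemma integral_inner_eval_ne {i j : ι} (hij : i ≠ j) {Di : α i → E} {Dj : α j → E}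
    (hi : Integrable Di (μ i)) (hj : Integrable Dj (μ j)) :
    ∫ ω, ⟪Di (ω i), Dj (ω j)⟫ ∂(Measure.pi μ) = ⟪∫ a, Di a ∂(μ i), ∫ b, Dj b ∂(μ j)⟫ := by
  have hT : Measurable fun ω : ∀ k, α k => (ω i, ω j) :=
    (measurable_pi_apply i).prodMk (measurable_pi_apply j)
  have h1 : AEStronglyMeasurable (fun z : α i × α j => ⟪Di z.1, Dj z.2⟫)
      (Measure.map (fun ω : ∀ k, α k => (ω i, ω j)) (Measure.pi μ)) := by
    rw [pi_map_eval_pair μ hij]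
    exact (hi.aestronglyMeasurable.comp_fst).inner (hj.aestronglyMeasurable.comp_snd)
  calc ∫ ω, ⟪Di (ω i), Dj (ω j)⟫ ∂(Measure.pi μ)
      = ∫ z : α i × α j, ⟪Di z.1, Dj z.2⟫ ∂((μ i).prod (μ j)) := by
        rw [← pi_map_eval_pair μ hij, integral_map hT.aemeasurable h1]
    _ = ∫ a, ∫ b, ⟪Di a, Dj b⟫ ∂(μ j) ∂(μ i) := integral_prod _ (integrable_inner_pair μ hij hi hj)
    _ = ∫ a, ⟪Di a, ∫ b, Dj b ∂(μ j)⟫ ∂(μ i) := by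
        refine integral_congr_ae (Filter.Eventually.of_forall fun a => ?_)
        exact integral_inner hj (Di a)
    _ = ⟪∫ a, Di a ∂(μ i), ∫ b, Dj b ∂(μ j)⟫ := by
        have h2 : ∀ a, ⟪Di a, ∫ b, Dj b ∂(μ j)⟫ = ⟪∫ b, Dj b ∂(μ j), Di a⟫ :=
          fun a => real_inner_comm _ _
        simp_rw [h2]
        rw [integral_inner hi]
        exact real_inner_comm _ _

end Aux2


set_option linter.unusedSectionVars false

section Aux3

variable {E : Type*} [NormedAddCommGroup E] [InnerProductSpace ℝ E] [CompleteSpace E]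

lemma integral_norm_sq_add_const {Ω : Type*} [MeasurableSpace Ω] {ν : Measure Ω}
    [IsProbabilityMeasure ν] {g : Ω → E} (hg : MemLp g 2 ν) (c : E) :
    ∫ ω, ‖g ω + c‖ ^ 2 ∂ν = ∫ ω, ‖g ω‖ ^ 2 ∂ν + 2 * ⟪∫ ω, g ω ∂ν, c⟫ + ‖c‖ ^ 2 := by
  have hgi : Integrable g ν := hg.integrable one_le_two
  have hsq : Integrable (fun ω => ‖g ω‖ ^ 2) ν :=
    (memLp_two_iff_integrable_sq_norm hg.1).mp hg
  have hinner : Integrable (fun ω => 2 * ⟪g ω, c⟫) ν := by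
    have h1 : Integrable (fun ω => ⟪g ω, c⟫) ν := by
      have hsm : AEStronglyMeasurable (fun ω => ⟪g ω, c⟫) ν :=
        hg.1.inner aestronglyMeasurable_const
      refine (hgi.norm.mul_const ‖c‖).mono' hsm ?_
      filter_upwards with ω
      simpa using abs_real_inner_le_norm (g ω) c
    exact h1.const_mul 2
  have hpt : ∀ ω, ‖g ω + c‖ ^ 2 = ‖g ω‖ ^ 2 + 2 * ⟪g ω, c⟫ + ‖c‖ ^ 2 :=
    fun ω => norm_add_sq_real (g ω) c
  simp_rw [hpt]
  have h2 : ∀ ω, ⟪g ω, c⟫ = ⟪c, g ω⟫ := fun ω => real_inner_comm _ _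
  calc ∫ ω, (‖g ω‖ ^ 2 + 2 * ⟪g ω, c⟫ + ‖c‖ ^ 2) ∂ν
      = (∫ ω, (‖g ω‖ ^ 2 + 2 * ⟪g ω, c⟫) ∂ν) + ∫ _ω, ‖c‖ ^ 2 ∂ν :=
        integral_add (hsq.add hinner) (integrable_const _)
    _ = ((∫ ω, ‖g ω‖ ^ 2 ∂ν) + ∫ ω, 2 * ⟪g ω, c⟫ ∂ν) + ‖c‖ ^ 2 := by
        rw [integral_add hsq hinner, integral_const]; simp
    _ = ∫ ω, ‖g ω‖ ^ 2 ∂ν + 2 * ⟪∫ ω, g ω ∂ν, c⟫ + ‖c‖ ^ 2 := by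
        rw [integral_const_mul]
        simp_rw [h2]
        rw [integral_inner hgi c, real_inner_comm]

variable {ι : Type*} [Fintype ι] [DecidableEq ι] {α : ι → Type*} [∀ i, MeasurableSpace (α i)]
  (μ : ∀ i, Measure (α i)) [∀ i, IsProbabilityMeasure (μ i)]

lemma integral_norm_sq_sum_eval (D : ∀ i, α i → E)
    (hD2 : ∀ i, MemLp (D i) 2 (μ i)) (hD0 : ∀ i, ∫ a, D i a ∂(μ i) = 0) :
    ∫ ω : ∀ j, α j, ‖∑ i, D i (ω i)‖ ^ 2 ∂(Measure.pi μ)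
      = ∑ i, ∫ a, ‖D i a‖ ^ 2 ∂(μ i) := by
  have hDi : ∀ i, Integrable (D i) (μ i) := fun i => (hD2 i).integrable one_le_two
  have hsq : ∀ i, Integrable (fun a => ‖D i a‖ ^ 2) (μ i) :=
    fun i => (memLp_two_iff_integrable_sq_norm (hD2 i).1).mp (hD2 i)
  have hterm : ∀ i j, Integrable
      (fun ω : ∀ k, α k => ⟪D i (ω i), D j (ω j)⟫) (Measure.pi μ) := by
    intro i j
    rcases eq_or_ne i j with rfl | hij
    · have h1 : (fun ω : ∀ k, α k => ⟪D i (ω i), D i (ω i)⟫)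
          = fun ω : ∀ k, α k => ‖D i (ω i)‖ ^ 2 := by
        funext ω; exact real_inner_self_eq_norm_sq _
      rw [h1]
      exact integrable_eval_comp μ (hsq i)
    · exact integrable_inner_eval_ne μ hij (hDi i) (hDi j)
  have hpt : ∀ ω : ∀ k, α k, ‖∑ i, D i (ω i)‖ ^ 2
      = ∑ i, ∑ j, ⟪D i (ω i), D j (ω j)⟫ := by
    intro ω
    rw [← real_inner_self_eq_norm_sq, sum_inner]
    exact Finset.sum_congr rfl fun i _ => inner_sum _ _ _
  simp_rw [hpt]
  rw [integral_finset_sum _ (fun i _ => integrable_finset_sum _ (fun j _ => hterm i j))]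
  refine Finset.sum_congr rfl fun i _ => ?_
  rw [integral_finset_sum _ (fun j _ => hterm i j)]
  rw [Finset.sum_eq_single_of_mem i (Finset.mem_univ i)]
  · have h1 : (fun ω : ∀ k, α k => ⟪D i (ω i), D i (ω i)⟫)
        = fun ω : ∀ k, α k => ‖D i (ω i)‖ ^ 2 := by
      funext ω; exact real_inner_self_eq_norm_sq _
    rw [h1, integral_eval_comp μ (hsq i).aestronglyMeasurable]
  · intro j _ hji
    rw [integral_inner_eval_ne μ (Ne.symm hji) (hDi i) (hDi j), hD0 i, hD0 j]
    simp

end Aux3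

set_option maxHeartbeats 1000000 in
/-- **STORM-type variance recursion for the network average.**
With independent fresh samples `ω₁,…,ω_m` (product measure), unbiased oracles
`Gⁱ` of `fⁱ` with variance at most `σ²` and a.e. `L`-Lipschitz realizations,
and `uⁱ⁺(ω) = Gⁱ(xⁱ⁺, ωᵢ) + (1−β)(uⁱ − Gⁱ(xⁱ, ωᵢ))`:
`E‖ū⁺ − ∇f(x⁺)‾‖² ≤ (1−β)‖ū − ∇f(x)‾‖² + 2β²σ²/m + (2L²/m²)∑ᵢ‖xⁱ⁺ − xⁱ‖²`. -/
theorem storm_variance_recursion_avg {d m : ℕ} (hm : 0 < m)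
    (Ωi : Fin m → Type) [∀ i, MeasurableSpace (Ωi i)]
    (μ : ∀ i, Measure (Ωi i)) [∀ i, IsProbabilityMeasure (μ i)]
    (f : Fin m → EuclideanSpace ℝ (Fin d) → ℝ)
    (hf : ∀ i, Differentiable ℝ (f i))
    (G : ∀ i : Fin m, EuclideanSpace ℝ (Fin d) → Ωi i → EuclideanSpace ℝ (Fin d))
    (σ L : ℝ) (hσ : 0 ≤ σ) (hL : 0 ≤ L)
    (hInt : ∀ i x, Integrable (G i x) (μ i))
    (hUnbiased : ∀ i x, ∫ ω, G i x ω ∂(μ i) = gradient (f i) x)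
    (hVar : ∀ i x, ∫ ω, ‖G i x ω - gradient (f i) x‖ ^ 2 ∂(μ i) ≤ σ ^ 2)
    (hLip : ∀ i, ∀ᵐ ω ∂(μ i), ∀ x y, ‖G i x ω - G i y ω‖ ≤ L * ‖x - y‖)
    (x xp u : Fin m → EuclideanSpace ℝ (Fin d))
    (β : ℝ) (hβ0 : 0 < β) (hβ1 : β ≤ 1) :
    ∫ ω : (∀ i, Ωi i),
        ‖((m : ℝ)⁻¹ • ∑ i, (G i (xp i) (ω i) + (1 - β) • (u i - G i (x i) (ω i)))) -
            (m : ℝ)⁻¹ • ∑ i, gradient (f i) (xp i)‖ ^ 2 ∂(Measure.pi μ) ≤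
      (1 - β) * ‖((m : ℝ)⁻¹ • ∑ i, u i) - (m : ℝ)⁻¹ • ∑ i, gradient (f i) (x i)‖ ^ 2 +
        2 * β ^ 2 * σ ^ 2 / m + 2 * L ^ 2 / (m : ℝ) ^ 2 * ∑ i, ‖xp i - x i‖ ^ 2 := by

  have hm0 : (m : ℝ) ≠ 0 := Nat.cast_ne_zero.mpr hm.ne'
  set D : ∀ i, Ωi i → EuclideanSpace ℝ (Fin d) :=
    fun i t => (G i (xp i) t - gradient (f i) (xp i))
      - (1 - β) • (G i (x i) t - gradient (f i) (x i)) with hDdef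
  set A : EuclideanSpace ℝ (Fin d) :=
    ((m : ℝ)⁻¹ • ∑ i, u i) - (m : ℝ)⁻¹ • ∑ i, gradient (f i) (x i) with hAdef
  have hvec : ∀ ω : ∀ i, Ωi i,
      ((m : ℝ)⁻¹ • ∑ i, (G i (xp i) (ω i) + (1 - β) • (u i - G i (x i) (ω i)))) -
        (m : ℝ)⁻¹ • ∑ i, gradient (f i) (xp i)
      = (1 - β) • A + (m : ℝ)⁻¹ • ∑ i, D i (ω i) := by
    intro ω
    have h1 : (1 - β) • A + (m : ℝ)⁻¹ • ∑ i, D i (ω i)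
        = (m : ℝ)⁻¹ • ∑ i, ((1 - β) • (u i - gradient (f i) (x i)) + D i (ω i)) := by
      rw [Finset.sum_add_distrib, smul_add, hAdef]
      congr 1
      rw [show ∑ i, (1 - β) • (u i - gradient (f i) (x i))
          = (1 - β) • ∑ i, (u i - gradient (f i) (x i)) from (Finset.smul_sum).symm,
        Finset.sum_sub_distrib]
      module
    rw [h1, ← smul_sub, ← Finset.sum_sub_distrib]
    congr 1
    refine Finset.sum_congr rfl fun i _ => ?_
    simp only [hDdef]
    module
  simp only [hvec]
  -- common facts
  have hPsm : ∀ i, AEStronglyMeasurable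
      (fun t => G i (xp i) t - gradient (f i) (xp i)) (μ i) :=
    fun i => (hInt i (xp i)).aestronglyMeasurable.sub aestronglyMeasurable_const
  have hQsm : ∀ i, AEStronglyMeasurable
      (fun t => G i (x i) t - gradient (f i) (x i)) (μ i) :=
    fun i => (hInt i (x i)).aestronglyMeasurable.sub aestronglyMeasurable_const
  have hDsm : ∀ i, AEStronglyMeasurable (D i) (μ i) := by
    intro i
    simp only [hDdef]
    exact (hPsm i).sub ((hQsm i).fun_const_smul _)
  set Δ : ∀ i, Ωi i → EuclideanSpace ℝ (Fin d) :=
    fun i t => (G i (xp i) t - G i (x i) t)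
      - (gradient (f i) (xp i) - gradient (f i) (x i)) with hΔdef
  have hYb : ∀ i, ∀ᵐ t ∂(μ i), ‖G i (xp i) t - G i (x i) t‖ ≤ L * ‖xp i - x i‖ :=
    fun i => (hLip i).mono fun t ht => ht (xp i) (x i)
  have hYsm : ∀ i, AEStronglyMeasurable (fun t => G i (xp i) t - G i (x i) t) (μ i) :=
    fun i => (hInt i (xp i)).aestronglyMeasurable.sub (hInt i (x i)).aestronglyMeasurable
  have hY2 : ∀ i, MemLp (fun t => G i (xp i) t - G i (x i) t) 2 (μ i) :=
    fun i => MemLp.of_bound (hYsm i) _ (hYb i)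
  have hΔ2 : ∀ i, MemLp (Δ i) 2 (μ i) := by
    intro i
    simp only [hΔdef]
    exact (hY2 i).sub (memLp_const _)
  by_cases hgood : ∀ i, MemLp (fun t => G i (xp i) t - gradient (f i) (xp i)) 2 (μ i)
  · -- GOOD CASE
    have hQ2 : ∀ i, MemLp (fun t => G i (x i) t - gradient (f i) (x i)) 2 (μ i) := by
      intro i
      have h1 : (fun t => G i (x i) t - gradient (f i) (x i))
          = fun t => (G i (xp i) t - gradient (f i) (xp i)) - Δ i t := by
        funext t; simp only [hΔdef]; module
      rw [h1]
      exact (hgood i).sub (hΔ2 i)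
    have hD2 : ∀ i, MemLp (D i) 2 (μ i) := by
      intro i
      simp only [hDdef]
      exact (hgood i).sub ((hQ2 i).const_smul (1 - β))
    have hP0 : ∀ i, ∫ t, (G i (xp i) t - gradient (f i) (xp i)) ∂(μ i) = 0 := by
      intro i
      rw [integral_sub (hInt i (xp i)) (integrable_const _), hUnbiased i (xp i), integral_const]
      simp
    have hQ0 : ∀ i, ∫ t, (G i (x i) t - gradient (f i) (x i)) ∂(μ i) = 0 := by
      intro i
      rw [integral_sub (hInt i (x i)) (integrable_const _), hUnbiased i (x i), integral_const]
      simp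
    have hD0 : ∀ i, ∫ t, D i t ∂(μ i) = 0 := by
      intro i
      simp only [hDdef]
      have h6 : Integrable (fun t => (1 - β) • (G i (x i) t - gradient (f i) (x i))) (μ i) :=
        ((hQ2 i).integrable one_le_two).smul ((1:ℝ) - β)
      rw [integral_sub ((hgood i).integrable one_le_two) h6, hP0 i, integral_smul, hQ0 i]
      simp
    have hvarΔ : ∀ i, ∫ t, ‖Δ i t‖ ^ 2 ∂(μ i) ≤ L ^ 2 * ‖xp i - x i‖ ^ 2 := by
      intro i
      have hEY : ∫ t, (G i (xp i) t - G i (x i) t) ∂(μ i)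
          = gradient (f i) (xp i) - gradient (f i) (x i) := by
        rw [integral_sub (hInt i (xp i)) (hInt i (x i)), hUnbiased, hUnbiased]
      have hexp := integral_norm_sq_add_const (hY2 i)
        (-(gradient (f i) (xp i) - gradient (f i) (x i)))
      have hΔeq : ∀ t, Δ i t = (G i (xp i) t - G i (x i) t)
          + -(gradient (f i) (xp i) - gradient (f i) (x i)) := by
        intro t; simp only [hΔdef]; module
      have hY2int : ∫ t, ‖G i (xp i) t - G i (x i) t‖ ^ 2 ∂(μ i)
          ≤ L ^ 2 * ‖xp i - x i‖ ^ 2 := by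
        have h3 := integral_mono_ae
          ((memLp_two_iff_integrable_sq_norm (hYsm i)).mp (hY2 i))
          (integrable_const (L ^ 2 * ‖xp i - x i‖ ^ 2))
          (by filter_upwards [hYb i] with t ht
              have h0 : (0:ℝ) ≤ L * ‖xp i - x i‖ := le_trans (norm_nonneg _) ht
              have h4 : ‖G i (xp i) t - G i (x i) t‖ ^ 2 ≤ (L * ‖xp i - x i‖) ^ 2 := by
                nlinarith [norm_nonneg (G i (xp i) t - G i (x i) t)]
              calc ‖G i (xp i) t - G i (x i) t‖ ^ 2 ≤ (L * ‖xp i - x i‖) ^ 2 := h4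
                _ = L ^ 2 * ‖xp i - x i‖ ^ 2 := by ring)
        simpa using h3
      have hip : ⟪gradient (f i) (xp i) - gradient (f i) (x i),
          -(gradient (f i) (xp i) - gradient (f i) (x i))⟫
          = -‖gradient (f i) (xp i) - gradient (f i) (x i)‖ ^ 2 := by
        rw [inner_neg_right, real_inner_self_eq_norm_sq]
      calc ∫ t, ‖Δ i t‖ ^ 2 ∂(μ i)
          = ∫ t, ‖(G i (xp i) t - G i (x i) t)
              + -(gradient (f i) (xp i) - gradient (f i) (x i))‖ ^ 2 ∂(μ i) := by
            simp_rw [hΔeq]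
        _ ≤ L ^ 2 * ‖xp i - x i‖ ^ 2 := by
            rw [hexp, hEY, hip, norm_neg]
            nlinarith [sq_nonneg ‖gradient (f i) (xp i) - gradient (f i) (x i)‖]
    have hDbound : ∀ i, ∫ t, ‖D i t‖ ^ 2 ∂(μ i)
        ≤ 2 * β ^ 2 * σ ^ 2 + 2 * L ^ 2 * ‖xp i - x i‖ ^ 2 := by
      intro i
      have hptD : ∀ t, ‖D i t‖ ^ 2
          ≤ 2 * β ^ 2 * ‖G i (xp i) t - gradient (f i) (xp i)‖ ^ 2 + 2 * ‖Δ i t‖ ^ 2 := by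
        intro t
        have hDt : D i t = β • (G i (xp i) t - gradient (f i) (xp i)) + (1 - β) • Δ i t := by
          simp only [hDdef, hΔdef]; module
        have h1 : ‖D i t‖ ≤ β * ‖G i (xp i) t - gradient (f i) (xp i)‖ + (1 - β) * ‖Δ i t‖ := by
          rw [hDt]
          refine le_trans (norm_add_le _ _) ?_
          rw [norm_smul, norm_smul, Real.norm_eq_abs, Real.norm_eq_abs,
            abs_of_nonneg hβ0.le, abs_of_nonneg (by linarith)]
        nlinarith [norm_nonneg (D i t), norm_nonneg (G i (xp i) t - gradient (f i) (xp i)),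
          norm_nonneg (Δ i t), hβ0.le, hβ1,
          sq_nonneg (β * ‖G i (xp i) t - gradient (f i) (xp i)‖ - (1 - β) * ‖Δ i t‖),
          mul_nonneg (mul_nonneg (by linarith : (0:ℝ) ≤ 1 - β) (by linarith : (0:ℝ) ≤ 1 + β - 1))
            (sq_nonneg ‖Δ i t‖)]
      have hintP2 := (memLp_two_iff_integrable_sq_norm (hPsm i)).mp (hgood i)
      have hintΔ2 := (memLp_two_iff_integrable_sq_norm (hΔ2 i).1).mp (hΔ2 i)
      have h2 := integral_mono_ae
        ((memLp_two_iff_integrable_sq_norm (hDsm i)).mp (hD2 i))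
        ((hintP2.const_mul (2 * β ^ 2)).add (hintΔ2.const_mul 2))
        (Filter.Eventually.of_forall hptD)
      simp only [Pi.add_apply] at h2
      rw [integral_add (hintP2.const_mul _) (hintΔ2.const_mul _),
        integral_const_mul, integral_const_mul] at h2
      have h3 := hVar i (xp i)
      have h4 := hvarΔ i
      nlinarith [sq_nonneg β]
    -- transfer to the product space
    have hWint : ∀ i, Integrable (fun ω : ∀ j, Ωi j => D i (ω i)) (Measure.pi μ) :=
      fun i => integrable_eval_comp μ ((hD2 i).integrable one_le_two)
    have hWmem : ∀ i, MemLp (fun ω : ∀ j, Ωi j => D i (ω i)) 2 (Measure.pi μ) := by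
      intro i
      refine (memLp_two_iff_integrable_sq_norm
        ((hDsm i).comp_quasiMeasurePreserving (pi_map_eval μ i).quasiMeasurePreserving)).mpr ?_
      exact integrable_eval_comp μ ((memLp_two_iff_integrable_sq_norm (hDsm i)).mp (hD2 i))
    have hSmem : MemLp (fun ω : ∀ j, Ωi j => ∑ i, D i (ω i)) 2 (Measure.pi μ) :=
      memLp_finset_sum Finset.univ fun i _ => hWmem i
    have hSsum := integral_norm_sq_sum_eval μ D hD2 hD0
    have hg0 : ∫ ω : ∀ j, Ωi j, (m : ℝ)⁻¹ • ∑ i, D i (ω i) ∂(Measure.pi μ) = 0 := by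
      rw [integral_smul, integral_finset_sum _ (fun i _ => hWint i)]
      have hz : ∀ i ∈ Finset.univ, ∫ ω : ∀ j, Ωi j, D i (ω i) ∂(Measure.pi μ)
          = (0 : EuclideanSpace ℝ (Fin d)) := by
        intro i _
        rw [integral_eval_comp μ (hDsm i)]
        exact hD0 i
      rw [Finset.sum_congr rfl hz]
      simp
    have hgmem : MemLp (fun ω : ∀ j, Ωi j => (m : ℝ)⁻¹ • ∑ i, D i (ω i)) 2 (Measure.pi μ) :=
      hSmem.const_smul ((m : ℝ)⁻¹)
    have hcomm : ∀ ω : ∀ j, Ωi j,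
        ‖(1 - β) • A + (m : ℝ)⁻¹ • ∑ i, D i (ω i)‖ ^ 2
        = ‖(m : ℝ)⁻¹ • ∑ i, D i (ω i) + (1 - β) • A‖ ^ 2 := by
      intro ω; rw [add_comm]
    calc ∫ ω : ∀ j, Ωi j, ‖(1 - β) • A + (m : ℝ)⁻¹ • ∑ i, D i (ω i)‖ ^ 2 ∂(Measure.pi μ)
        = ∫ ω : ∀ j, Ωi j, ‖(m : ℝ)⁻¹ • ∑ i, D i (ω i) + (1 - β) • A‖ ^ 2 ∂(Measure.pi μ) := by
          simp_rw [hcomm]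
      _ = ∫ ω : ∀ j, Ωi j, ‖(m : ℝ)⁻¹ • ∑ i, D i (ω i)‖ ^ 2 ∂(Measure.pi μ)
            + 2 * ⟪∫ ω : ∀ j, Ωi j, (m : ℝ)⁻¹ • ∑ i, D i (ω i) ∂(Measure.pi μ), (1 - β) • A⟫
            + ‖(1 - β) • A‖ ^ 2 := integral_norm_sq_add_const hgmem _
      _ = ((m : ℝ)⁻¹) ^ 2 * (∑ i, ∫ t, ‖D i t‖ ^ 2 ∂(μ i)) + ‖(1 - β) • A‖ ^ 2 := by
          rw [hg0]
          simp only [inner_zero_left, mul_zero, add_zero]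
          congr 1
          have h5 : ∀ ω : ∀ j, Ωi j, ‖(m : ℝ)⁻¹ • ∑ i, D i (ω i)‖ ^ 2
              = ((m : ℝ)⁻¹) ^ 2 * ‖∑ i, D i (ω i)‖ ^ 2 := by
            intro ω
            rw [norm_smul, mul_pow, Real.norm_eq_abs, abs_of_nonneg (by positivity)]
          simp_rw [h5]
          rw [integral_const_mul, hSsum]
      _ ≤ (1 - β) * ‖A‖ ^ 2 + 2 * β ^ 2 * σ ^ 2 / m
            + 2 * L ^ 2 / (m : ℝ) ^ 2 * ∑ i, ‖xp i - x i‖ ^ 2 := by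
          have hT : ∑ i, ∫ t, ‖D i t‖ ^ 2 ∂(μ i)
              ≤ (m : ℝ) * (2 * β ^ 2 * σ ^ 2) + 2 * L ^ 2 * ∑ i, ‖xp i - x i‖ ^ 2 := by
            calc ∑ i, ∫ t, ‖D i t‖ ^ 2 ∂(μ i)
                ≤ ∑ i, (2 * β ^ 2 * σ ^ 2 + 2 * L ^ 2 * ‖xp i - x i‖ ^ 2) :=
                  Finset.sum_le_sum fun i _ => hDbound i
              _ = (m : ℝ) * (2 * β ^ 2 * σ ^ 2) + 2 * L ^ 2 * ∑ i, ‖xp i - x i‖ ^ 2 := by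
                  rw [Finset.sum_add_distrib, Finset.sum_const, ← Finset.mul_sum]
                  simp [Finset.card_univ, nsmul_eq_mul]
          have hnorm : ‖(1 - β) • A‖ ^ 2 ≤ (1 - β) * ‖A‖ ^ 2 := by
            rw [norm_smul, Real.norm_eq_abs, abs_of_nonneg (by linarith), mul_pow]
            have h7 : (1 - β) ^ 2 ≤ 1 - β := by nlinarith
            exact mul_le_mul_of_nonneg_right h7 (sq_nonneg ‖A‖)
          have e1 : ((m : ℝ)⁻¹) ^ 2 * ((m : ℝ) * (2 * β ^ 2 * σ ^ 2)
                + 2 * L ^ 2 * ∑ i, ‖xp i - x i‖ ^ 2)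
              = 2 * β ^ 2 * σ ^ 2 / m
                + 2 * L ^ 2 / (m : ℝ) ^ 2 * ∑ i, ‖xp i - x i‖ ^ 2 := by
            field_simp
          have e2 := mul_le_mul_of_nonneg_left hT (sq_nonneg ((m : ℝ)⁻¹))
          linarith
  · -- BAD CASE
    push_neg at hgood
    obtain ⟨j, hbad⟩ := hgood
    have hRHS : (0:ℝ) ≤ (1 - β) * ‖A‖ ^ 2 + 2 * β ^ 2 * σ ^ 2 / m
        + 2 * L ^ 2 / (m : ℝ) ^ 2 * ∑ i, ‖xp i - x i‖ ^ 2 := by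
      have h1 : (0:ℝ) ≤ (1 - β) * ‖A‖ ^ 2 :=
        mul_nonneg (by linarith) (sq_nonneg _)
      have h2 : (0:ℝ) ≤ 2 * β ^ 2 * σ ^ 2 / m := by positivity
      have h3 : (0:ℝ) ≤ 2 * L ^ 2 / (m : ℝ) ^ 2 * ∑ i, ‖xp i - x i‖ ^ 2 :=
        mul_nonneg (by positivity) (Finset.sum_nonneg fun i _ => sq_nonneg _)
      linarith
    by_cases hI : Integrable
        (fun ω : ∀ i, Ωi i => ‖(1 - β) • A + (m : ℝ)⁻¹ • ∑ i, D i (ω i)‖ ^ 2) (Measure.pi μ)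
    swap
    · rw [integral_undef hI]
      exact hRHS
    exfalso
    apply hbad
    -- measurability over the product space
    have hWsm : ∀ i, AEStronglyMeasurable (fun ω : ∀ j, Ωi j => D i (ω i)) (Measure.pi μ) :=
      fun i => (hDsm i).comp_quasiMeasurePreserving (pi_map_eval μ i).quasiMeasurePreserving
    have hZsm : AEStronglyMeasurable
        (fun ω : ∀ j, Ωi j => (1 - β) • A + (m : ℝ)⁻¹ • ∑ i, D i (ω i)) (Measure.pi μ) :=
      aestronglyMeasurable_const.add
        ((Finset.aestronglyMeasurable_fun_sum Finset.univ fun i _ => hWsm i).fun_const_smul ((m : ℝ)⁻¹))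
    have hZ2 : MemLp (fun ω : ∀ j, Ωi j => (1 - β) • A + (m : ℝ)⁻¹ • ∑ i, D i (ω i)) 2
        (Measure.pi μ) := (memLp_two_iff_integrable_sq_norm hZsm).mpr hI
    have hS2 : MemLp (fun ω : ∀ j, Ωi j => ∑ i, D i (ω i)) 2 (Measure.pi μ) := by
      have h1 : (fun ω : ∀ j, Ωi j => ∑ i, D i (ω i))
          = fun ω : ∀ j, Ωi j => (m : ℝ) •
              (((1 - β) • A + (m : ℝ)⁻¹ • ∑ i, D i (ω i)) - (1 - β) • A) := by
        funext ω
        rw [add_sub_cancel_left, smul_smul, mul_inv_cancel₀ hm0, one_smul]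
      rw [h1]
      exact (hZ2.sub (memLp_const _)).const_smul (m : ℝ)
    have hSsq : Integrable (fun ω : ∀ j, Ωi j => ‖∑ i, D i (ω i)‖ ^ 2) (Measure.pi μ) :=
      (memLp_two_iff_integrable_sq_norm hS2.1).mp hS2
    -- Fubini: split off coordinate j
    set p : Fin m → Prop := fun i => i = j with hp
    letI : Fintype (Subtype p) := Subtype.fintype p
    letI : Fintype {i // ¬p i} := Subtype.fintype _
    set e := MeasurableEquiv.piEquivPiSubtypeProd Ωi p with he
    have hmp : MeasurePreserving (⇑e) (Measure.pi μ)
        ((Measure.pi fun i : Subtype p => μ i).prod (Measure.pi fun i : {i // ¬p i} => μ i)) :=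
      measurePreserving_piEquivPiSubtypeProd μ p
    have hms : MeasurePreserving (⇑e.symm)
        ((Measure.pi fun i : Subtype p => μ i).prod (Measure.pi fun i : {i // ¬p i} => μ i))
        (Measure.pi μ) := MeasurePreserving.symm _ hmp
    have hItr : Integrable (fun z : (∀ i : Subtype p, Ωi i) × (∀ i : {i // ¬p i}, Ωi i) =>
        ‖∑ i, D i (e.symm z i)‖ ^ 2)
        ((Measure.pi fun i : Subtype p => μ i).prod (Measure.pi fun i : {i // ¬p i} => μ i)) := by
      have h1 : AEStronglyMeasurable (fun ω : ∀ j, Ωi j => ‖∑ i, D i (ω i)‖ ^ 2)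
          (Measure.map (⇑e.symm)
            ((Measure.pi fun i : Subtype p => μ i).prod (Measure.pi fun i : {i // ¬p i} => μ i))) := by
        rw [hms.map_eq]
        exact hSsq.aestronglyMeasurable
      exact (integrable_map_measure h1 hms.measurable.aemeasurable).mp
        (by rw [hms.map_eq]; exact hSsq)
    have hb := hItr.prod_left_ae
    haveI : (MeasureTheory.ae (Measure.pi fun i : {i // ¬p i} => μ i)).NeBot :=
      ae_neBot.mpr (IsProbabilityMeasure.ne_zero _)
    obtain ⟨b₀, hb₀⟩ := hb.exists
    -- the symm equiv applied coordinatewise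
    have happ : ∀ (a : ∀ i : Subtype p, Ωi i) (b : ∀ i : {i // ¬p i}, Ωi i) (i : Fin m),
        e.symm (a, b) i = if h : p i then a ⟨i, h⟩ else b ⟨i, h⟩ := by
      intro a b i
      rfl
    set r : EuclideanSpace ℝ (Fin d) :=
      ∑ i ∈ Finset.univ.erase j, (if h : p i then 0 else D i (b₀ ⟨i, h⟩)) with hr
    have hsplit : ∀ a : ∀ i : Subtype p, Ωi i,
        ∑ i, D i (e.symm (a, b₀) i) = D j (a ⟨j, rfl⟩) + r := by
      intro a
      rw [← Finset.add_sum_erase _ _ (Finset.mem_univ j)]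
      congr 1
      · rw [happ]
        simp [hp]
      · rw [hr]
        refine Finset.sum_congr rfl fun i hi => ?_
        have hij : ¬ p i := (Finset.mem_erase.mp hi).1
        rw [dif_neg hij, happ, dif_neg hij]
    simp_rw [hsplit] at hb₀
    -- transfer along evaluation at ⟨j, rfl⟩ on the subtype-pi space
    have hev := pi_map_eval (fun i : Subtype p => μ i) (⟨j, rfl⟩ : Subtype p)
    have hφsm : AEStronglyMeasurable (fun t : Ωi j => ‖D j t + r‖ ^ 2) (μ j) :=
      (continuous_pow 2).comp_aestronglyMeasurable
        ((hDsm j).add aestronglyMeasurable_const).norm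
    have hφint : Integrable (fun t : Ωi j => ‖D j t + r‖ ^ 2) (μ j) := by
      have h1 : AEStronglyMeasurable (fun t : Ωi j => ‖D j t + r‖ ^ 2)
          (Measure.map (fun a : ∀ i : Subtype p, Ωi i => a ⟨j, rfl⟩)
            (Measure.pi fun i : Subtype p => μ i)) := by
        rw [hev.map_eq]
        exact hφsm
      have h2 := (integrable_map_measure h1 hev.measurable.aemeasurable).mpr hb₀
      rwa [hev.map_eq] at h2
    have hDjsq : Integrable (fun t : Ωi j => ‖D j t‖ ^ 2) (μ j) := by
      refine ((hφint.const_mul 2).add (integrable_const (2 * ‖r‖ ^ 2))).mono'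
        ((continuous_pow 2).comp_aestronglyMeasurable (hDsm j).norm) ?_
      filter_upwards with t
      have h1 : ‖D j t‖ ≤ ‖D j t + r‖ + ‖r‖ := by
        calc ‖D j t‖ = ‖(D j t + r) - r‖ := by rw [add_sub_cancel_right]
          _ ≤ ‖D j t + r‖ + ‖r‖ := norm_sub_le _ _
      rw [Real.norm_eq_abs, abs_of_nonneg (by positivity : (0:ℝ) ≤ ‖D j t‖ ^ 2)]
      show ‖D j t‖ ^ 2 ≤ 2 * ‖D j t + r‖ ^ 2 + 2 * ‖r‖ ^ 2
      nlinarith [pow_le_pow_left₀ (norm_nonneg (D j t)) h1 2,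
        sq_nonneg (‖D j t + r‖ - ‖r‖)]
    have hDj2 : MemLp (D j) 2 (μ j) :=
      (memLp_two_iff_integrable_sq_norm (hDsm j)).mpr hDjsq
    have hPj : (fun t => G j (xp j) t - gradient (f j) (xp j))
        = fun t => β⁻¹ • (D j t - (1 - β) • Δ j t) := by
      funext t
      have h2 : D j t - (1 - β) • Δ j t
          = β • (G j (xp j) t - gradient (f j) (xp j)) := by
        simp only [hDdef, hΔdef]
        module
      rw [h2, smul_smul, inv_mul_cancel₀ hβ0.ne', one_smul]
    rw [hPj]
    exact ((hDj2.sub ((hΔ2 j).const_smul (1 - β))).const_smul β⁻¹)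
end

section
/- Let f_1,…,f_n : ℝ^d → ℝ have L-Lipschitz gradients and set f = (1/n)Σ_{k=1}^n f_k. Fix x, x' ∈ ℝ^d, u' ∈ ℝ^d, z_1,…,z_n ∈ ℝ^d, β ∈ (0,1], and 1 ≤ b ≤ n. Let I be a uniformly random subset of {1,…,n} of size b, and define the ZeroSARAH estimator u(I) = (1/b)Σ_{k∈I}(∇f_k(x) − ∇f_k(x')) + (1−β)u' + β((1/b)Σ_{k∈I}(∇f_k(x') − z_k) + (1/n)Σ_{j=1}^n z_j). Then E_I ‖u(I) − ∇f(x)‖² ≤ (1−β)‖u' − ∇f(x')‖² + (2β²/b)·(1/n)Σ_{k=1}^n ‖∇f_k(x') − z_k‖² + (2L²/b)‖x − x'‖². -/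
set_option maxHeartbeats 1000000

open Finset

lemma count_subsets {α : Type*} [DecidableEq α] (s t : Finset α) (hts : t ⊆ s) (b : ℕ) :
    ((powersetCard (b + t.card) s).filter (fun I => t ⊆ I)).card = (s.card - t.card).choose b := by
  rw [← Finset.card_sdiff_of_subset hts, ← card_powersetCard b (s \ t)]
  apply Finset.card_bij (fun I _ => I \ t)
  · intro I hI
    simp only [mem_filter, mem_powersetCard] at hI
    obtain ⟨⟨hIs, hcard⟩, htI⟩ := hI
    rw [mem_powersetCard]
    constructor
    · exact sdiff_subset_sdiff hIs subset_rfl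
    · rw [card_sdiff_of_subset htI, hcard, Nat.add_sub_cancel]
  · intro I hI J hJ h
    simp only [mem_filter] at hI hJ
    have := congrArg (· ∪ t) h
    simpa [sdiff_union_of_subset hI.2, sdiff_union_of_subset hJ.2] using this
  · intro J hJ
    rw [mem_powersetCard] at hJ
    obtain ⟨hJs, hJcard⟩ := hJ
    have hdisj : Disjoint J t := Finset.disjoint_of_subset_left hJs (Finset.sdiff_disjoint)
    refine ⟨J ∪ t, ?_, ?_⟩
    · simp only [mem_filter, mem_powersetCard]
      refine ⟨⟨?_, ?_⟩, subset_union_right⟩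
      · exact union_subset (hJs.trans (sdiff_subset)) hts
      · rw [card_union_of_disjoint hdisj, hJcard]
    · rw [union_sdiff_right, sdiff_eq_self_of_disjoint hdisj]

lemma swap_single {α M : Type*} [DecidableEq α] [AddCommMonoid M] (s : Finset α) (b : ℕ) (v : α → M) :
    ∑ I ∈ powersetCard b s, ∑ k ∈ I, v k
      = ∑ k ∈ s, ((powersetCard b s).filter (fun I => k ∈ I)).card • v k := by
  have h : ∀ I ∈ powersetCard b s, ∑ k ∈ I, v k = ∑ k ∈ s, if k ∈ I then v k else 0 := by
    intro I hI
    rw [mem_powersetCard] at hI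
    rw [← Finset.sum_filter, Finset.filter_mem_eq_inter, Finset.inter_eq_right.mpr hI.1]
  rw [Finset.sum_congr rfl h, Finset.sum_comm]
  refine Finset.sum_congr rfl fun k _ => ?_
  rw [← Finset.sum_filter, Finset.sum_const]

lemma swap_pair {α M : Type*} [DecidableEq α] [AddCommMonoid M] (s : Finset α) (b : ℕ) (q : α → α → M) :
    ∑ I ∈ powersetCard b s, ∑ k ∈ I, ∑ l ∈ I, q k l
      = ∑ k ∈ s, ∑ l ∈ s, ((powersetCard b s).filter (fun I => k ∈ I ∧ l ∈ I)).card • q k l := by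
  have h : ∀ I ∈ powersetCard b s, ∑ k ∈ I, ∑ l ∈ I, q k l
      = ∑ k ∈ s, ∑ l ∈ s, if k ∈ I ∧ l ∈ I then q k l else 0 := by
    intro I hI
    rw [mem_powersetCard] at hI
    rw [← Finset.sum_subset hI.1 (fun x _ hx => ?_)]
    · refine Finset.sum_congr rfl fun k hk => ?_
      rw [← Finset.sum_subset hI.1 (fun x _ hx => by simp [hx])]
      refine Finset.sum_congr rfl fun l hl => by simp [hk, hl]
    · refine Finset.sum_eq_zero fun l _ => by simp [hx]
  rw [Finset.sum_congr rfl h, Finset.sum_comm]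
  refine Finset.sum_congr rfl fun k _ => ?_
  rw [Finset.sum_comm]
  refine Finset.sum_congr rfl fun l _ => ?_
  rw [← Finset.sum_filter, Finset.sum_const]

lemma count_one {n b : ℕ} (hb : 1 ≤ b) (k : Fin n) :
    ((powersetCard b (univ : Finset (Fin n))).filter (fun I => k ∈ I)).card
      = (n-1).choose (b-1) := by
  obtain ⟨r, rfl⟩ := Nat.exists_eq_add_of_le' hb
  have h := count_subsets (univ : Finset (Fin n)) {k} (by simp) r
  rw [card_singleton, Finset.card_univ, Fintype.card_fin] at h
  rw [Nat.add_sub_cancel, ← h]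
  congr 1
  exact Finset.filter_congr (fun I _ => by simp)

lemma count_pair_zero {n : ℕ} {k l : Fin n} (hkl : k ≠ l) :
    ((powersetCard 1 (univ : Finset (Fin n))).filter (fun I => k ∈ I ∧ l ∈ I)).card = 0 := by
  rw [Finset.card_eq_zero, Finset.filter_eq_empty_iff]
  rintro I hI ⟨hk, hl⟩
  rw [mem_powersetCard] at hI
  have hsub : ({k, l} : Finset (Fin n)) ⊆ I := by
    intro x hx; rcases Finset.mem_insert.mp hx with rfl | hx
    · exact hk
    · rw [Finset.mem_singleton] at hx; subst hx; exact hl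
  have h2 : ({k, l} : Finset (Fin n)).card = 2 := by
    rw [Finset.card_insert_of_notMem (by simpa using hkl), Finset.card_singleton]
  have := Finset.card_le_card hsub
  omega

lemma count_pair {n r : ℕ} {k l : Fin n} (hkl : k ≠ l) :
    ((powersetCard (r+2) (univ : Finset (Fin n))).filter (fun I => k ∈ I ∧ l ∈ I)).card
      = (n-2).choose r := by
  have h2 : ({k, l} : Finset (Fin n)).card = 2 := by
    rw [Finset.card_insert_of_notMem (by simpa using hkl), Finset.card_singleton]
  have h := count_subsets (univ : Finset (Fin n)) {k, l} (subset_univ _) r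
  rw [h2, Finset.card_univ, Fintype.card_fin] at h
  rw [← h]
  congr 1
  exact Finset.filter_congr (fun I _ => by simp [Finset.insert_subset_iff])

lemma gradient_avg {d n : ℕ} (f : Fin n → EuclideanSpace ℝ (Fin d) → ℝ)
    (hdiff : ∀ k, Differentiable ℝ (f k)) (y : EuclideanSpace ℝ (Fin d)) :
    gradient (fun v => (n:ℝ)⁻¹ * ∑ k, f k v) y = (n:ℝ)⁻¹ • ∑ k, gradient (f k) y := by
  have hg : ∀ k : Fin n, HasFDerivAt (f k)
      (InnerProductSpace.toDual ℝ _ (gradient (f k) y)) y :=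
    fun k => ((hdiff k).differentiableAt.hasGradientAt).hasFDerivAt
  have hsum : HasFDerivAt (fun v => ∑ k, f k v)
      (∑ k, InnerProductSpace.toDual ℝ _ (gradient (f k) y)) y :=
    HasFDerivAt.fun_sum (fun k _ => hg k)
  have hmul := hsum.const_mul ((n:ℝ)⁻¹)
  have : HasGradientAt (fun v => (n:ℝ)⁻¹ * ∑ k, f k v)
      ((n:ℝ)⁻¹ • ∑ k, gradient (f k) y) y := by
    rw [hasGradientAt_iff_hasFDerivAt, map_smul, map_sum]
    exact hmul
  exact this.gradient

open scoped RealInnerProductSpace in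
lemma central {E : Type*} [NormedAddCommGroup E] [InnerProductSpace ℝ E]
    {n b : ℕ} (hb1 : 1 ≤ b) (hbn : b ≤ n) (w : Fin n → E) (v : E) :
    ((n.choose b : ℝ))⁻¹ * ∑ I ∈ powersetCard b (univ : Finset (Fin n)),
      ‖((b:ℝ)⁻¹ • ∑ k ∈ I, w k - (n:ℝ)⁻¹ • ∑ k, w k) + v‖^2
    ≤ ‖v‖^2 + ((b:ℝ) * n)⁻¹ * ∑ k, ‖w k‖^2 := by
  have hn1 : 1 ≤ n := hb1.trans hbn
  set P := powersetCard b (univ : Finset (Fin n)) with hPdef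
  set W := ∑ k, w k with hWdef
  set c1 : ℕ := (n-1).choose (b-1) with hc1def
  set C : ℝ := (n.choose b : ℝ) with hCdef
  have hCpos : 0 < C := by
    rw [hCdef]; exact_mod_cast Nat.choose_pos hbn
  have hbR : (0:ℝ) < b := by exact_mod_cast hb1
  have hnR : (0:ℝ) < n := by exact_mod_cast hn1
  -- key nat identity: n * c1 = C * b
  have hnat1 : n * c1 = n.choose b * b := by
    have := Nat.add_one_mul_choose_eq (n-1) (b-1)
    rwa [Nat.sub_add_cancel hn1,
      Nat.sub_add_cancel hb1] at this
  have hc1R : (c1 : ℝ) * n = b * C := by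
    have := congrArg (Nat.cast : ℕ → ℝ) hnat1
    push_cast at this
    rw [hCdef]; push_cast; linarith
  -- package for N2
  obtain ⟨N2, hcount2, hN2le, hrel⟩ : ∃ N2 : ℕ,
      (∀ k l : Fin n, k ≠ l → (P.filter (fun I => k ∈ I ∧ l ∈ I)).card = N2)
      ∧ N2 ≤ c1 ∧ (b-1) * c1 = (n-1) * N2 := by
    obtain ⟨r, rfl⟩ := Nat.exists_eq_add_of_le' hb1
    cases r with
    | zero =>
      exact ⟨0, fun k l hkl => count_pair_zero hkl, Nat.zero_le _, by simp⟩
    | succ r =>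
      have hn2 : 2 ≤ n := by omega
      refine ⟨(n-2).choose r, fun k l hkl => count_pair hkl, ?_, ?_⟩
      · have hsub : n - 1 = (n - 2) + 1 := by omega
        rw [hc1def, Nat.add_sub_cancel, hsub, Nat.choose_succ_succ]
        exact Nat.le_add_right _ _
      · have hsub : n - 1 = (n - 2) + 1 := by omega
        have h := Nat.add_one_mul_choose_eq (n-2) r
        rw [← hsub] at h
        rw [hc1def, Nat.add_sub_cancel, Nat.mul_comm]
        exact h.symm
  have hrelR : ((b:ℝ)-1) * c1 = ((n:ℝ)-1) * N2 := by
    have h1 : ((b-1 : ℕ) : ℝ) = (b:ℝ) - 1 := by push_cast [Nat.cast_sub hb1]; ring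
    have h2 : ((n-1 : ℕ) : ℝ) = (n:ℝ) - 1 := by push_cast [Nat.cast_sub hn1]; ring
    rw [← h1, ← h2]; exact_mod_cast congrArg (Nat.cast : ℕ → ℝ) hrel
  have hN2leR : (N2:ℝ) ≤ c1 := by exact_mod_cast hN2le
  have hn2N2 : (n:ℝ)^2 * N2 ≤ (b:ℝ)^2 * C := by
    nlinarith [hc1R, hrelR, hN2leR, hnR, hbR, Nat.cast_nonneg (α := ℝ) N2]
  have hcount1 : ∀ k : Fin n, (P.filter (fun I => k ∈ I)).card = c1 :=
    fun k => count_one hb1 k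
  have hcard : (P.card : ℝ) = C := by
    rw [hPdef, card_powersetCard, Finset.card_univ, Fintype.card_fin, hCdef]
  -- sum of X_I
  have hsumX : ∑ I ∈ P, ∑ k ∈ I, w k = (c1:ℝ) • W :=
    calc ∑ I ∈ P, ∑ k ∈ I, w k
        = ∑ k : Fin n, (P.filter (fun I => k ∈ I)).card • w k := swap_single _ _ _
      _ = ∑ k : Fin n, (c1:ℝ) • w k := Finset.sum_congr rfl fun k _ => by
            rw [hcount1 k]; exact (Nat.cast_smul_eq_nsmul ℝ _ _).symm
      _ = (c1:ℝ) • W := by rw [hWdef, Finset.smul_sum]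
  -- inner products with W
  have hXW : ∑ I ∈ P, ⟪∑ k ∈ I, w k, W⟫ = (c1:ℝ) * ‖W‖^2 := by
    rw [← sum_inner, hsumX, real_inner_smul_left, real_inner_self_eq_norm_sq]
  -- second moment identity
  have hXX : ∑ I ∈ P, ‖∑ k ∈ I, w k‖^2
      = (N2:ℝ) * ‖W‖^2 + ((c1:ℝ) - N2) * ∑ k, ‖w k‖^2 := by
    have e1 : ∀ u : E, ‖u‖^2 = ⟪u, u⟫ := fun u => (real_inner_self_eq_norm_sq u).symm
    have e2 : ∀ I : Finset (Fin n), ‖∑ k ∈ I, w k‖^2 = ∑ k ∈ I, ∑ l ∈ I, ⟪w k, w l⟫ := by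
      intro I
      rw [e1, sum_inner]
      exact Finset.sum_congr rfl fun k _ => inner_sum _ _ _
    have eW : ∑ k : Fin n, ∑ l : Fin n, ⟪w k, w l⟫ = ‖W‖^2 := by
      rw [hWdef, ← e2]
    calc ∑ I ∈ P, ‖∑ k ∈ I, w k‖^2
        = ∑ I ∈ P, ∑ k ∈ I, ∑ l ∈ I, ⟪w k, w l⟫ := Finset.sum_congr rfl fun I _ => e2 I
      _ = ∑ k : Fin n, ∑ l : Fin n,
            ((P.filter (fun I => k ∈ I ∧ l ∈ I)).card : ℝ) * ⟪w k, w l⟫ := by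
          rw [swap_pair]
          exact Finset.sum_congr rfl fun k _ => Finset.sum_congr rfl fun l _ =>
            (nsmul_eq_mul _ _)
      _ = ∑ k : Fin n, ∑ l : Fin n,
            ((N2:ℝ) * ⟪w k, w l⟫ + (if k = l then ((c1:ℝ) - N2) * ⟪w k, w l⟫ else 0)) := by
          refine Finset.sum_congr rfl fun k _ => Finset.sum_congr rfl fun l _ => ?_
          by_cases h : k = l
          · subst h
            have hfc : (P.filter (fun I => k ∈ I ∧ k ∈ I)).card = c1 := by
              rw [← hcount1 k]; congr 1; exact Finset.filter_congr (fun I _ => by simp)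
            simp only [and_self] at hfc
            simp only [and_self, if_pos rfl, hfc, if_true]
            ring
          · rw [hcount2 k l h, if_neg h, add_zero]
      _ = (N2:ℝ) * ‖W‖^2 + ((c1:ℝ) - N2) * ∑ k, ‖w k‖^2 := by
          have hrow : ∀ k : Fin n,
              ∑ l : Fin n, ((N2:ℝ) * ⟪w k, w l⟫ + (if k = l then ((c1:ℝ) - N2) * ⟪w k, w l⟫ else 0))
                = (N2:ℝ) * ⟪w k, W⟫ + ((c1:ℝ) - N2) * ‖w k‖^2 := by
            intro k
            rw [Finset.sum_add_distrib, ← Finset.mul_sum, ← inner_sum,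
              Finset.sum_ite_eq (univ : Finset (Fin n)) k
                (fun l => ((c1:ℝ) - N2) * ⟪w k, w l⟫), if_pos (mem_univ _), ← e1 (w k)]
          rw [Finset.sum_congr rfl fun k _ => hrow k, Finset.sum_add_distrib,
            ← Finset.mul_sum, ← sum_inner, ← hWdef, ← e1 W, ← Finset.mul_sum]
  -- sum of deviations is zero
  have hzero : ((b:ℝ)⁻¹ * c1 - C * (n:ℝ)⁻¹) = 0 := by
    field_simp
    linear_combination hc1R
  have hDzero : ∑ I ∈ P, ((b:ℝ)⁻¹ • ∑ k ∈ I, w k - (n:ℝ)⁻¹ • W) = 0 := by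
    rw [Finset.sum_sub_distrib, ← Finset.smul_sum, hsumX, Finset.sum_const,
      ← Nat.cast_smul_eq_nsmul ℝ, hcard, smul_smul, smul_smul, ← sub_smul, hzero, zero_smul]
  have hcross : ∑ I ∈ P, ⟪(b:ℝ)⁻¹ • ∑ k ∈ I, w k - (n:ℝ)⁻¹ • W, v⟫ = 0 := by
    rw [← sum_inner, hDzero, inner_zero_left]
  set S : ℝ := ∑ k, ‖w k‖^2 with hSdef
  have hS0 : 0 ≤ S := by positivity
  have hT0 : (0:ℝ) ≤ ‖W‖^2 := by positivity
  have hDsq : ∑ I ∈ P, ‖(b:ℝ)⁻¹ • ∑ k ∈ I, w k - (n:ℝ)⁻¹ • W‖^2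
      = (b:ℝ)⁻¹^2 * ((N2:ℝ) * ‖W‖^2 + ((c1:ℝ) - N2) * S)
        - 2*((b:ℝ)⁻¹*(n:ℝ)⁻¹*c1)*‖W‖^2 + C*((n:ℝ)⁻¹^2*‖W‖^2) := by
    have expand : ∀ I : Finset (Fin n), ‖(b:ℝ)⁻¹ • ∑ k ∈ I, w k - (n:ℝ)⁻¹ • W‖^2
        = (b:ℝ)⁻¹^2 * ‖∑ k ∈ I, w k‖^2 - 2*((b:ℝ)⁻¹*(n:ℝ)⁻¹)*⟪∑ k ∈ I, w k, W⟫
          + (n:ℝ)⁻¹^2*‖W‖^2 := by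
      intro I
      rw [norm_sub_sq_real, norm_smul, norm_smul, real_inner_smul_left, real_inner_smul_right,
        Real.norm_eq_abs, abs_of_nonneg (by positivity : (0:ℝ) ≤ (b:ℝ)⁻¹),
        Real.norm_eq_abs, abs_of_nonneg (by positivity : (0:ℝ) ≤ (n:ℝ)⁻¹)]
      ring
    rw [Finset.sum_congr rfl fun I _ => expand I, Finset.sum_add_distrib,
      Finset.sum_sub_distrib, ← Finset.mul_sum, ← Finset.mul_sum, hXX, hXW,
      Finset.sum_const, nsmul_eq_mul, hcard]
    ring
  -- key coefficient facts
  have h5 : (b:ℝ)⁻¹*(n:ℝ)⁻¹*(c1:ℝ) = C*(n:ℝ)⁻¹^2 := by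
    field_simp
    linear_combination hc1R
  have h4 : (b:ℝ)⁻¹^2 * (N2:ℝ) ≤ C * (n:ℝ)⁻¹^2 := by
    have h41 : ((N2:ℝ)) / (b:ℝ)^2 ≤ C / (n:ℝ)^2 := by
      rw [div_le_div_iff₀ (by positivity) (by positivity)]
      nlinarith [hn2N2]
    calc (b:ℝ)⁻¹^2 * (N2:ℝ) = (N2:ℝ) / (b:ℝ)^2 := by ring
      _ ≤ C / (n:ℝ)^2 := h41
      _ = C * (n:ℝ)⁻¹^2 := by ring
  have hterm1 : ((b:ℝ)⁻¹^2 * N2) * ‖W‖^2 ≤ (C * (n:ℝ)⁻¹^2) * ‖W‖^2 :=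
    mul_le_mul_of_nonneg_right h4 hT0
  have hterm2 : (0:ℝ) ≤ (b:ℝ)⁻¹^2 * ((N2:ℝ) * S) := by positivity
  have hCbnS : C*(((b:ℝ)*n)⁻¹*S) = (b:ℝ)⁻¹^2*((c1:ℝ)*S) := by
    have : C*((b:ℝ)*n)⁻¹ = (b:ℝ)⁻¹^2*(c1:ℝ) := by
      field_simp
      linear_combination (-1:ℝ) * hc1R
    rw [← mul_assoc, this, mul_assoc]
  have key : (b:ℝ)⁻¹^2 * ((N2:ℝ) * ‖W‖^2 + ((c1:ℝ) - N2) * S)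
        - 2*((b:ℝ)⁻¹*(n:ℝ)⁻¹*c1)*‖W‖^2 + C*((n:ℝ)⁻¹^2*‖W‖^2)
      ≤ C*(((b:ℝ)*n)⁻¹*S) := by
    rw [h5, hCbnS]
    linarith [hterm1, hterm2]
  -- final assembly
  calc C⁻¹ * ∑ I ∈ P, ‖((b:ℝ)⁻¹ • ∑ k ∈ I, w k - (n:ℝ)⁻¹ • W) + v‖^2
      = C⁻¹ * (∑ I ∈ P, ‖(b:ℝ)⁻¹ • ∑ k ∈ I, w k - (n:ℝ)⁻¹ • W‖^2
          + (2 * ∑ I ∈ P, ⟪(b:ℝ)⁻¹ • ∑ k ∈ I, w k - (n:ℝ)⁻¹ • W, v⟫ + C * ‖v‖^2)) := by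
        rw [Finset.sum_congr rfl fun I _ => norm_add_sq_real _ v,
          Finset.sum_add_distrib, Finset.sum_add_distrib, ← Finset.mul_sum,
          Finset.sum_const, nsmul_eq_mul, hcard, add_assoc]
    _ = C⁻¹ * (∑ I ∈ P, ‖(b:ℝ)⁻¹ • ∑ k ∈ I, w k - (n:ℝ)⁻¹ • W‖^2 + C * ‖v‖^2) := by
        rw [hcross]; ring_nf
    _ ≤ C⁻¹ * (C*(((b:ℝ)*n)⁻¹*S) + C * ‖v‖^2) := by
        apply mul_le_mul_of_nonneg_left _ (by positivity)
        rw [hDsq]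
        linarith [key]
    _ = ‖v‖^2 + ((b:ℝ) * n)⁻¹ * S := by
        field_simp
        ring

/-- **Variance recursion of the ZeroSARAH estimator.**
With `f = (1/n)∑ₖ fₖ`, each `∇fₖ` being `L`-Lipschitz, a uniformly random
size-`b` subset `I` of `{1,…,n}`, and
`u(I) = (1/b)∑_{k∈I}(∇fₖ(x) − ∇fₖ(x')) + (1−β)u'
        + β((1/b)∑_{k∈I}(∇fₖ(x') − zₖ) + (1/n)∑ⱼ zⱼ)`,
one has `E_I‖u(I) − ∇f(x)‖² ≤ (1−β)‖u' − ∇f(x')‖²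
  + (2β²/b)(1/n)∑ₖ‖∇fₖ(x') − zₖ‖² + (2L²/b)‖x − x'‖²`. -/
theorem zerosarah_variance_recursion {d n : ℕ} (hn : 0 < n)
    (L : ℝ) (hL : 0 ≤ L)
    (f : Fin n → EuclideanSpace ℝ (Fin d) → ℝ)
    (hdiff : ∀ k, Differentiable ℝ (f k))
    (hlip : ∀ k x y, ‖gradient (f k) x - gradient (f k) y‖ ≤ L * ‖x - y‖)
    (x x' u' : EuclideanSpace ℝ (Fin d))
    (z : Fin n → EuclideanSpace ℝ (Fin d))
    (β : ℝ) (hβ0 : 0 < β) (hβ1 : β ≤ 1)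
    (b : ℕ) (hb1 : 1 ≤ b) (hbn : b ≤ n) :
    (n.choose b : ℝ)⁻¹ *
        ∑ I ∈ Finset.powersetCard b (Finset.univ : Finset (Fin n)),
          ‖((b : ℝ)⁻¹ • ∑ k ∈ I, (gradient (f k) x - gradient (f k) x')) +
              (1 - β) • u' +
              β • (((b : ℝ)⁻¹ • ∑ k ∈ I, (gradient (f k) x' - z k)) +
                (n : ℝ)⁻¹ • ∑ j, z j) -
              gradient (fun y => (n : ℝ)⁻¹ * ∑ k, f k y) x‖ ^ 2 ≤
      (1 - β) * ‖u' - gradient (fun y => (n : ℝ)⁻¹ * ∑ k, f k y) x'‖ ^ 2 +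
        2 * β ^ 2 / b * ((n : ℝ)⁻¹ * ∑ k, ‖gradient (f k) x' - z k‖ ^ 2) +
        2 * L ^ 2 / b * ‖x - x'‖ ^ 2 := by
  have hgdef : ∀ k : Fin n, gradient (f k) = gradient (f k) := fun _ => rfl
  set w : Fin n → EuclideanSpace ℝ (Fin d) :=
    fun k => (gradient (f k) x - gradient (f k) x') + β • (gradient (f k) x' - z k) with hwdef
  set v : EuclideanSpace ℝ (Fin d) :=
    (1 - β) • (u' - (n:ℝ)⁻¹ • ∑ k, gradient (f k) x') with hvdef
  have hgradx := gradient_avg f hdiff x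
  have hgradx' := gradient_avg f hdiff x'
  have hbR : (0:ℝ) < b := by exact_mod_cast hb1
  have hnR : (0:ℝ) < n := by exact_mod_cast hn
  -- rewrite each summand
  have hterm : ∀ I ∈ powersetCard b (univ : Finset (Fin n)),
      ‖((b : ℝ)⁻¹ • ∑ k ∈ I, (gradient (f k) x - gradient (f k) x')) + (1 - β) • u' +
          β • (((b : ℝ)⁻¹ • ∑ k ∈ I, (gradient (f k) x' - z k)) + (n : ℝ)⁻¹ • ∑ j, z j) -
          gradient (fun y => (n : ℝ)⁻¹ * ∑ k, f k y) x‖ ^ 2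
        = ‖((b:ℝ)⁻¹ • ∑ k ∈ I, w k - (n:ℝ)⁻¹ • ∑ k, w k) + v‖^2 := by
    intro I _
    congr 2
    rw [hgradx]
    simp only [hwdef, hvdef, Finset.sum_add_distrib, Finset.sum_sub_distrib, ← Finset.smul_sum]
    module
  rw [Finset.sum_congr rfl hterm, hgradx']
  refine le_trans (central hb1 hbn w v) ?_
  -- bound the two terms
  have hvnorm : ‖v‖^2 = (1-β)^2 * ‖u' - (n:ℝ)⁻¹ • ∑ k, gradient (f k) x'‖^2 := by
    rw [hvdef, norm_smul, Real.norm_eq_abs, abs_of_nonneg (by linarith), mul_pow]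
  have hwbound : ∀ k : Fin n, ‖w k‖^2 ≤ 2*(L^2*‖x-x'‖^2) + 2*β^2*‖gradient (f k) x' - z k‖^2 := by
    intro k
    have h1 : ‖w k‖ ≤ ‖gradient (f k) x - gradient (f k) x'‖ + β * ‖gradient (f k) x' - z k‖ := by
      refine le_trans (norm_add_le _ _) ?_
      rw [norm_smul, Real.norm_eq_abs, abs_of_pos hβ0]
    have h2 : ‖gradient (f k) x - gradient (f k) x'‖ ≤ L * ‖x - x'‖ := hlip k x x'
    nlinarith [norm_nonneg (w k), norm_nonneg (gradient (f k) x' - z k), norm_nonneg (gradient (f k) x - gradient (f k) x'),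
      sq_nonneg (‖gradient (f k) x - gradient (f k) x'‖ - β * ‖gradient (f k) x' - z k‖),
      mul_nonneg hL (norm_nonneg (x - x')), mul_pos hβ0 hβ0]
  have hsumw : ∑ k, ‖w k‖^2 ≤ n * (2*(L^2*‖x-x'‖^2)) + 2*β^2 * ∑ k, ‖gradient (f k) x' - z k‖^2 := by
    calc ∑ k, ‖w k‖^2 ≤ ∑ k : Fin n, (2*(L^2*‖x-x'‖^2) + 2*β^2*‖gradient (f k) x' - z k‖^2) :=
          Finset.sum_le_sum (fun k _ => hwbound k)
      _ = n * (2*(L^2*‖x-x'‖^2)) + 2*β^2 * ∑ k, ‖gradient (f k) x' - z k‖^2 := by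
          rw [Finset.sum_add_distrib, Finset.sum_const, card_univ, Fintype.card_fin,
            nsmul_eq_mul, ← Finset.mul_sum]
  have hfrac : ((b:ℝ)*n)⁻¹ * (n * (2*(L^2*‖x-x'‖^2)) + 2*β^2 * ∑ k, ‖gradient (f k) x' - z k‖^2)
      = 2 * L^2 / b * ‖x-x'‖^2 + 2*β^2/b * ((n:ℝ)⁻¹ * ∑ k, ‖gradient (f k) x' - z k‖^2) := by
    field_simp
  have hsq : (1-β)^2 ≤ 1-β := by nlinarith
  have h2' : ((b:ℝ)*n)⁻¹ * ∑ k, ‖w k‖^2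
      ≤ 2 * L^2 / b * ‖x-x'‖^2 + 2*β^2/b * ((n:ℝ)⁻¹ * ∑ k, ‖gradient (f k) x' - z k‖^2) := by
    rw [← hfrac]
    exact mul_le_mul_of_nonneg_left hsumw (by positivity)
  have hvle : ‖v‖^2 ≤ (1-β) * ‖u' - (n:ℝ)⁻¹ • ∑ k, gradient (f k) x'‖^2 := by
    rw [hvnorm]
    exact mul_le_mul_of_nonneg_right hsq (by positivity)
  linarith [hvle, h2']
end

section
/- Let f_1,…,f_n : ℝ^d → ℝ have L-Lipschitz gradients. Fix x, x' ∈ ℝ^d, z_1,…,z_n ∈ ℝ^d, and 1 ≤ b ≤ n. Let I be a uniformly random subset of {1,…,n} of size b, and define z⁺_k = ∇f_k(x) for k ∈ I and z⁺_k = z_k for k ∉ I. Then E_I[(1/n)Σ_{k=1}^n ‖∇f_k(x) − z⁺_k‖²] ≤ (1 − b/(2n))·(1/n)Σ_{k=1}^n ‖∇f_k(x') − z_k‖² + (2n/b − b/n − 1)·L²‖x − x'‖². -/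
open Finset

private lemma saga_sq_split {E : Type*} [NormedAddCommGroup E] (a a' : E) {c : ℝ} (hc : 0 < c) :
    ‖a‖ ^ 2 ≤ (1 + c) * ‖a'‖ ^ 2 + (1 + c⁻¹) * ‖a - a'‖ ^ 2 := by
  have h : ‖a‖ ≤ ‖a'‖ + ‖a - a'‖ := norm_le_norm_add_norm_sub' a a'
  have hpq : ‖a‖ ^ 2 ≤ (‖a'‖ + ‖a - a'‖) ^ 2 :=
    pow_le_pow_left₀ (norm_nonneg a) h 2
  have h4 : 0 ≤ (c * ‖a'‖ - ‖a - a'‖) ^ 2 / c := div_nonneg (sq_nonneg _) hc.le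
  have h5 : (c * ‖a'‖ - ‖a - a'‖) ^ 2 / c
      = (1 + c) * ‖a'‖ ^ 2 + (1 + c⁻¹) * ‖a - a'‖ ^ 2 - (‖a'‖ + ‖a - a'‖) ^ 2 := by
    field_simp
    ring
  linarith [h5 ▸ h4]

private lemma saga_count {n b : ℕ} (k : Fin n) :
    ((Finset.powersetCard b (Finset.univ : Finset (Fin n))).filter (fun I => k ∉ I)).card
      = (n - 1).choose b := by
  have h : ((Finset.powersetCard b (Finset.univ : Finset (Fin n))).filter (fun I => k ∉ I))
      = Finset.powersetCard b ((Finset.univ : Finset (Fin n)).erase k) := by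
    ext I
    simp only [Finset.mem_filter, Finset.mem_powersetCard, Finset.subset_erase,
      Finset.subset_univ, true_and]
    tauto
  rw [h, Finset.card_powersetCard, Finset.card_erase_of_mem (Finset.mem_univ k),
    Finset.card_univ, Fintype.card_fin]

set_option maxHeartbeats 800000 in
/-- **SAGA-table drift recursion.**
With each `∇fₖ` being `L`-Lipschitz, a uniformly random size-`b` subset `I` of
`{1,…,n}`, and the table update `z⁺ₖ = ∇fₖ(x)` for `k ∈ I`, `z⁺ₖ = zₖ` otherwise:
`E_I[(1/n)∑ₖ‖∇fₖ(x) − z⁺ₖ‖²] ≤ (1 − b/(2n))(1/n)∑ₖ‖∇fₖ(x') − zₖ‖²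
  + (2n/b − b/n − 1)L²‖x − x'‖²`. -/
theorem saga_table_recursion {d n : ℕ} (hn : 0 < n)
    (L : ℝ) (hL : 0 ≤ L)
    (f : Fin n → EuclideanSpace ℝ (Fin d) → ℝ)
    (hdiff : ∀ k, Differentiable ℝ (f k))
    (hlip : ∀ k x y, ‖gradient (f k) x - gradient (f k) y‖ ≤ L * ‖x - y‖)
    (x x' : EuclideanSpace ℝ (Fin d))
    (z : Fin n → EuclideanSpace ℝ (Fin d))
    (b : ℕ) (hb1 : 1 ≤ b) (hbn : b ≤ n) :
    (n.choose b : ℝ)⁻¹ *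
        ∑ I ∈ Finset.powersetCard b (Finset.univ : Finset (Fin n)),
          (n : ℝ)⁻¹ * ∑ k,
            ‖gradient (f k) x - (if k ∈ I then gradient (f k) x else z k)‖ ^ 2 ≤
      (1 - (b : ℝ) / (2 * n)) * ((n : ℝ)⁻¹ * ∑ k, ‖gradient (f k) x' - z k‖ ^ 2) +
        (2 * (n : ℝ) / b - (b : ℝ) / n - 1) * L ^ 2 * ‖x - x'‖ ^ 2 := by
  set g : Fin n → EuclideanSpace ℝ (Fin d) := fun k => gradient (f k) x with hg
  set g' : Fin n → EuclideanSpace ℝ (Fin d) := fun k => gradient (f k) x' with hg'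
  set S : ℝ := ∑ k, ‖g k - z k‖ ^ 2 with hS
  set S' : ℝ := ∑ k, ‖g' k - z k‖ ^ 2 with hS'
  set T : ℝ := L ^ 2 * ‖x - x'‖ ^ 2 with hT
  have hSnn : 0 ≤ S := Finset.sum_nonneg fun k _ => sq_nonneg _
  have hS'nn : 0 ≤ S' := Finset.sum_nonneg fun k _ => sq_nonneg _
  have hTnn : 0 ≤ T := mul_nonneg (sq_nonneg _) (sq_nonneg _)
  have hnR : (0:ℝ) < n := Nat.cast_pos.mpr hn
  have hbR : (0:ℝ) < b := Nat.cast_pos.mpr hb1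
  have hbnR : (b:ℝ) ≤ n := Nat.cast_le.mpr hbn
  -- Step A: compute the LHS exactly
  have hA : (n.choose b : ℝ)⁻¹ *
        ∑ I ∈ Finset.powersetCard b (Finset.univ : Finset (Fin n)),
          (n : ℝ)⁻¹ * ∑ k,
            ‖gradient (f k) x - (if k ∈ I then gradient (f k) x else z k)‖ ^ 2
      = ((n:ℝ) - b) / n * ((n:ℝ)⁻¹ * S) := by
    have hterm : ∀ I ∈ Finset.powersetCard b (Finset.univ : Finset (Fin n)),
        (n : ℝ)⁻¹ * ∑ k,
            ‖gradient (f k) x - (if k ∈ I then gradient (f k) x else z k)‖ ^ 2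
          = (n : ℝ)⁻¹ * ∑ k, (if k ∈ I then 0 else ‖g k - z k‖ ^ 2) := by
      intro I _
      congr 1
      refine Finset.sum_congr rfl fun k _ => ?_
      split_ifs <;> simp [hg]
    rw [Finset.sum_congr rfl hterm, ← Finset.mul_sum, Finset.sum_comm]
    have hk : ∀ k : Fin n,
        ∑ I ∈ Finset.powersetCard b (Finset.univ : Finset (Fin n)),
          (if k ∈ I then 0 else ‖g k - z k‖ ^ 2)
        = ((n-1).choose b : ℝ) * ‖g k - z k‖ ^ 2 := by
      intro k
      have hsw : ∀ I : Finset (Fin n),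
          (if k ∈ I then (0:ℝ) else ‖g k - z k‖ ^ 2)
          = (if k ∉ I then ‖g k - z k‖ ^ 2 else 0) := by
        intro I; split_ifs <;> tauto
      simp_rw [hsw]
      rw [← Finset.sum_filter, Finset.sum_const, saga_count k, nsmul_eq_mul]
    rw [Finset.sum_congr rfl fun k _ => hk k, ← Finset.mul_sum, ← hS]
    -- choose identity: (n - b) * n.choose b = n * (n-1).choose b
    have h1 : n * (n-1).choose b = n.choose b * (n - b) := by
      obtain ⟨m, rfl⟩ := Nat.exists_eq_add_of_lt hn
      simp only [Nat.add_sub_cancel]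
      rw [Nat.zero_add] at *
      rw [Nat.add_one_mul_choose_eq, Nat.choose_succ_right_eq]
    have h2 : (n:ℝ) * ((n-1).choose b : ℝ) = (n.choose b : ℝ) * ((n:ℝ) - (b:ℝ)) := by
      rw [← Nat.cast_sub hbn]
      exact_mod_cast h1
    have hch : (0:ℝ) < (n.choose b : ℝ) := by
      exact_mod_cast Nat.choose_pos hbn
    have hdiv : ((n:ℝ) - b) / n = ((n-1).choose b : ℝ) / (n.choose b : ℝ) := by
      rw [div_eq_div_iff hnR.ne' hch.ne']
      linarith [h2]
    rw [hdiv, div_eq_mul_inv]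
    ring
  rw [hA]
  -- Case b = n
  rcases eq_or_lt_of_le hbnR with heq | hlt
  · rw [← heq]
    have h0 : ((b:ℝ) - b) / b * ((b:ℝ)⁻¹ * S) = 0 := by ring
    rw [h0]
    have h1 : (0:ℝ) ≤ (1 - (b : ℝ) / (2 * b)) * ((b : ℝ)⁻¹ * S') := by
      have : (1 - (b : ℝ) / (2 * b)) = 1/2 := by
        rw [mul_comm, ← div_div, div_self hbR.ne']
        norm_num
      rw [this]
      positivity
    have h2 : (2 * (b : ℝ) / b - (b : ℝ) / b - 1) = 0 := by
      field_simp
      norm_num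
    rw [h2, zero_mul, zero_mul]
    linarith
  -- Case b < n
  · set c : ℝ := (b:ℝ) / (2 * ((n:ℝ) - b)) with hc
    have hnb : (0:ℝ) < (n:ℝ) - b := by linarith
    have hcpos : 0 < c := by positivity
    have hkey : ∀ k : Fin n, ‖g k - z k‖ ^ 2
        ≤ (1 + c) * ‖g' k - z k‖ ^ 2 + (1 + c⁻¹) * T := by
      intro k
      have h1 := saga_sq_split (g k - z k) (g' k - z k) hcpos
      have h2 : (g k - z k) - (g' k - z k) = g k - g' k := by abel
      rw [h2] at h1
      have h3 : ‖g k - g' k‖ ^ 2 ≤ T := by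
        have := hlip k x x'
        rw [hT]
        nlinarith [norm_nonneg (g k - g' k), norm_nonneg (x - x')]
      have hc1 : (0:ℝ) ≤ 1 + c⁻¹ := by positivity
      linarith [h1, mul_le_mul_of_nonneg_left h3 hc1]
    have hsum : S ≤ (1 + c) * S' + (n:ℝ) * ((1 + c⁻¹) * T) := by
      have hh := Finset.sum_le_sum (fun k (_ : k ∈ Finset.univ) => hkey k)
      simp only [Finset.sum_add_distrib, ← Finset.mul_sum, Finset.sum_const,
        Finset.card_univ, Fintype.card_fin, nsmul_eq_mul] at hh
      rw [hS, hS', hT]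
      linarith [hh]
    have step1 : ((n:ℝ) - b) / n * ((n:ℝ)⁻¹ * S)
        ≤ ((n:ℝ) - b) / n * ((n:ℝ)⁻¹ * ((1 + c) * S' + (n:ℝ) * ((1 + c⁻¹) * T))) := by
      apply mul_le_mul_of_nonneg_left _ (by positivity)
      exact mul_le_mul_of_nonneg_left hsum (by positivity)
    refine step1.trans ?_
    have hcoef1 : ((n:ℝ) - b) / n * ((n:ℝ)⁻¹ * ((1 + c) * S'))
        = (1 - (b : ℝ) / (2 * n)) * ((n : ℝ)⁻¹ * S') := by
      rw [hc]; field_simp; ring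
    have hcoef2 : ((n:ℝ) - b) / n * ((n:ℝ)⁻¹ * ((n:ℝ) * ((1 + c⁻¹) * T)))
        ≤ (2 * (n : ℝ) / b - (b : ℝ) / n - 1) * T := by
      rw [hc]
      have hinv : ((b:ℝ) / (2 * ((n:ℝ) - b)))⁻¹ = 2 * ((n:ℝ) - b) / b := by
        rw [inv_div]
      rw [hinv]
      have hLHS : ((n:ℝ) - b) / n * ((n:ℝ)⁻¹ * ((n:ℝ) * ((1 + 2 * ((n:ℝ) - b) / b) * T)))
          = (((n:ℝ) - b) * (2*(n:ℝ) - b) / ((b:ℝ) * n)) * T := by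
        field_simp; ring
      rw [hLHS]
      apply mul_le_mul_of_nonneg_right _ hTnn
      rw [div_le_iff₀ (by positivity)]
      have hexp : (2 * (n : ℝ) / b - (b : ℝ) / n - 1) * ((b:ℝ) * n)
          = 2*(n:ℝ)*n - (b:ℝ)*b - (b:ℝ)*n := by field_simp; try ring
      rw [hexp]
      nlinarith [hnb, hbR]
    calc ((n:ℝ) - b) / n * ((n:ℝ)⁻¹ * ((1 + c) * S' + (n:ℝ) * ((1 + c⁻¹) * T)))
        = ((n:ℝ) - b) / n * ((n:ℝ)⁻¹ * ((1 + c) * S'))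
          + ((n:ℝ) - b) / n * ((n:ℝ)⁻¹ * ((n:ℝ) * ((1 + c⁻¹) * T))) := by ring
      _ ≤ (1 - (b : ℝ) / (2 * n)) * ((n : ℝ)⁻¹ * S')
          + (2 * (n : ℝ) / b - (b : ℝ) / n - 1) * T :=
            add_le_add (le_of_eq hcoef1) hcoef2
      _ = (1 - (b : ℝ) / (2 * n)) * ((n : ℝ)⁻¹ * ∑ k, ‖gradient (f k) x' - z k‖ ^ 2) +
        (2 * (n : ℝ) / b - (b : ℝ) / n - 1) * L ^ 2 * ‖x - x'‖ ^ 2 := by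
        rw [hS', hT]; ring
end
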